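/- arXiv:math/0507514 — 6 statements merged into one kernel-verified Lean document; each statement's English description precedes it below -/
import Mathlib

section
/- The exponential generating function identity exp(arcsin(u√t)/√t) = Σ_{n≥0} (∏_{0≤k<(n-2)/2} (1+(n-2-2k)²t)) uⁿ/n! holds as an identity of formal power series (equivalently, of real-analytic functions for small u, t > 0). -/
open Real Finset

namespace EgfAux

noncomputable def A (t : ℝ) (n : ℕ) : ℝ :=
  ∏ k ∈ Finset.range ((n - 1) / 2), (1 + ((n : ℝ) - 2 - 2 * k) ^ 2 * t)

lemma A_zero (t : ℝ) : A t 0 = 1 := by simp [A]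
lemma A_one (t : ℝ) : A t 1 = 1 := by simp [A]

lemma A_rec (t : ℝ) (n : ℕ) : A t (n + 2) = (1 + (n : ℝ) ^ 2 * t) * A t n := by
  rcases n with _ | m
  · norm_num [A]
  · have h : (m + 1 + 2 - 1) / 2 = (m + 1 - 1) / 2 + 1 := by omega
    rw [A, A, h, Finset.prod_range_succ', mul_comm]
    congr 1
    · push_cast; ring_nf
    · apply Finset.prod_congr rfl
      intro k _
      push_cast; ring_nf

lemma A_nonneg {t : ℝ} (ht : 0 ≤ t) (n : ℕ) : 0 ≤ A t n :=
  Finset.prod_nonneg fun k _ => by positivity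

lemma A_le {t : ℝ} (ht0 : 0 ≤ t) (ht1 : t ≤ 1) (n : ℕ) : A t n ≤ ((n : ℝ) + 1) ^ n := by
  have h1 : A t n ≤ ∏ _k ∈ Finset.range ((n - 1) / 2), ((n : ℝ) + 1) ^ 2 := by
    apply Finset.prod_le_prod (fun k _ => by positivity)
    intro k hk
    have hk' : 2 * k + 3 ≤ n := by
      have := Finset.mem_range.mp hk; omega
    have hk'' : 2 * (k : ℝ) + 3 ≤ (n : ℝ) := by exact_mod_cast hk'
    have hk0 : (0:ℝ) ≤ (k : ℝ) := Nat.cast_nonneg k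
    nlinarith [sq_nonneg ((n : ℝ) - 2 - 2 * k)]
  refine h1.trans ?_
  rw [Finset.prod_const, Finset.card_range, ← pow_mul]
  have h2 : 2 * ((n - 1) / 2) ≤ n := by omega
  exact pow_le_pow_right₀ (by linarith [Nat.cast_nonneg (α := ℝ) n]) h2

lemma pow_div_factorial_le_exp {x : ℝ} (hx : 0 ≤ x) (m : ℕ) :
    x ^ m / m.factorial ≤ Real.exp x := by
  calc x ^ m / m.factorial ≤ ∑ i ∈ Finset.range (m + 1), x ^ i / i.factorial := by
        apply Finset.single_le_sum (f := fun i => x ^ i / (i.factorial : ℝ))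
          (fun i _ => by positivity) (Finset.self_mem_range_succ m)
    _ ≤ Real.exp x := Real.sum_le_exp_of_nonneg hx _

lemma A_div_le {t : ℝ} (ht0 : 0 ≤ t) (ht1 : t ≤ 1) (n : ℕ) :
    A t n / n.factorial ≤ Real.exp ((n : ℝ) + 1) := by
  have hf : (0:ℝ) < n.factorial := by exact_mod_cast n.factorial_pos
  have h1 : A t n / n.factorial ≤ ((n : ℝ) + 1) ^ n / n.factorial := by
    gcongr
    exact A_le ht0 ht1 n
  have h2 : ((n : ℝ) + 1) ^ n / n.factorial = ((n : ℝ) + 1) ^ (n + 1) / (n + 1).factorial := by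
    rw [Nat.factorial_succ, pow_succ]
    push_cast
    field_simp
  have h3 : ((n : ℝ) + 1) ^ (n + 1) / (n + 1).factorial ≤ Real.exp ((n : ℝ) + 1) := by
    have := pow_div_factorial_le_exp (x := (n : ℝ) + 1) (by positivity) (n + 1)
    exact this
  linarith



lemma summable_main (k : ℕ) :
    Summable (fun n : ℕ => ((n : ℝ) + 2) ^ k * Real.exp ((n : ℝ) + 3) * (4⁻¹ : ℝ) ^ n) := by
  set x : ℝ := Real.exp 1 * 4⁻¹ with hxdef
  have hx0 : 0 < x := by positivity
  have hx : ‖x‖ < 1 := by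
    rw [Real.norm_eq_abs, abs_of_pos hx0, hxdef]
    have := Real.exp_one_lt_d9
    linarith
  have h1 : Summable (fun n : ℕ => (3:ℝ)^k * ((n:ℝ)^k * x^n) + (3:ℝ)^k * x^n) :=
    ((summable_pow_mul_geometric_of_norm_lt_one k hx).mul_left _).add
      ((summable_geometric_of_norm_lt_one hx).mul_left _)
  have h2 : Summable (fun n : ℕ => ((n:ℝ)+2)^k * x^n) := by
    apply Summable.of_nonneg_of_le (fun n => by positivity) ?_ h1
    intro n
    have hb : ((n:ℝ)+2)^k ≤ (3:ℝ)^k * (n:ℝ)^k + 3^k := by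
      rcases Nat.eq_zero_or_pos n with h|h
      · subst h
        have h4 : (2:ℝ)^k ≤ (3:ℝ)^k := pow_le_pow_left₀ (by norm_num) (by norm_num) k
        have h5 : (0:ℝ) ≤ (3:ℝ)^k * ((0:ℝ))^k := by positivity
        push_cast
        norm_num
        linarith
      · have h1' : (1:ℝ) ≤ (n:ℝ) := by exact_mod_cast h
        have : ((n:ℝ)+2)^k ≤ (3*(n:ℝ))^k :=
          pow_le_pow_left₀ (by positivity) (by linarith) k
        rw [mul_pow] at this
        have h3 : (0:ℝ) ≤ (3:ℝ)^k := by positivity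
        linarith
    calc ((n:ℝ)+2)^k * x^n ≤ ((3:ℝ)^k*(n:ℝ)^k + 3^k) * x^n :=
          mul_le_mul_of_nonneg_right hb (by positivity)
      _ = (3:ℝ)^k * ((n:ℝ)^k * x^n) + (3:ℝ)^k * x^n := by ring
  apply (h2.mul_left (Real.exp 3)).congr
  intro n
  have e1 : Real.exp ((n:ℝ) + 3) = Real.exp 1 ^ n * Real.exp 3 := by
    rw [← Real.exp_nat_mul, ← Real.exp_add]
    ring_nf
  rw [e1, hxdef, mul_pow]
  ring

lemma summable_of_bound {c : ℕ → ℝ} (k : ℕ) (C : ℝ)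
    (h : ∀ n, |c n| ≤ C * (((n : ℝ) + 2) ^ k * Real.exp ((n : ℝ) + 3) * (4⁻¹:ℝ) ^ n)) :
    Summable c :=
  Summable.of_norm_bounded ((summable_main k).mul_left C) h

lemma hasDerivAt_series (c : ℕ → ℝ)
    (hsum : Summable (fun n : ℕ => ((n : ℝ) + 1) * |c (n + 1)| * (4⁻¹ : ℝ) ^ n))
    {x : ℝ} (hx : x ∈ Metric.ball (0 : ℝ) 4⁻¹) :
    HasDerivAt (fun y : ℝ => ∑' n, c n * y ^ n)
      (∑' n : ℕ, ((n : ℝ) + 1) * c (n + 1) * x ^ n) x := by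
  set u : ℕ → ℝ := fun n =>
    Nat.casesOn n 0 (fun m => ((m : ℝ) + 1) * |c (m + 1)| * (4⁻¹ : ℝ) ^ m) with hudef
  have hu : Summable u := by
    have h' : Summable (fun n : ℕ => u (n + 1)) := hsum
    exact (summable_nat_add_iff 1).mp h'
  have hderiv : ∀ n y, y ∈ Metric.ball (0:ℝ) 4⁻¹ →
      HasDerivAt (fun z : ℝ => c n * z ^ n) (c n * ((n:ℝ) * y ^ (n-1))) y :=
    fun n y _ => (hasDerivAt_pow n y).const_mul (c n)
  have hbound : ∀ n y, y ∈ Metric.ball (0:ℝ) 4⁻¹ → ‖c n * ((n:ℝ) * y ^ (n-1))‖ ≤ u n := by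
    intro n y hy
    have hy' : |y| ≤ 4⁻¹ := by
      have := Metric.mem_ball.mp hy
      rw [Real.dist_eq, sub_zero] at this
      linarith
    rcases n with _ | m
    · simp [hudef]
    · show ‖c (m+1) * (((m+1:ℕ):ℝ) * y ^ (m + 1 - 1))‖ ≤ ((m:ℝ)+1) * |c (m+1)| * (4⁻¹:ℝ)^m
      simp only [Nat.add_sub_cancel]
      push_cast
      rw [norm_mul, norm_mul, norm_pow, Real.norm_eq_abs, Real.norm_eq_abs, Real.norm_eq_abs,
        abs_of_nonneg (show (0:ℝ) ≤ (m:ℝ)+1 by positivity)]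
      calc |c (m+1)| * (((m:ℝ)+1) * |y|^m) = ((m:ℝ)+1) * |c (m+1)| * |y|^m := by ring
        _ ≤ ((m:ℝ)+1) * |c (m+1)| * (4⁻¹:ℝ)^m := by
            gcongr
  have hsum0 : Summable (fun n => c n * (0:ℝ) ^ n) := by
    apply summable_of_ne_finset_zero (s := {0})
    intro n hn
    simp [zero_pow (by simpa using hn)]
  have H := hasDerivAt_tsum_of_isPreconnected hu Metric.isOpen_ball
    (convex_ball (0:ℝ) 4⁻¹).isPreconnected hderiv hbound
    (Metric.mem_ball_self (by norm_num)) hsum0 hx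
  have hs2 : Summable (fun n => c n * ((n:ℝ) * x ^ (n-1))) :=
    Summable.of_norm_bounded hu (fun n => hbound n x hx)
  have heq : (∑' n, c n * ((n:ℝ) * x ^ (n-1))) = ∑' n : ℕ, ((n : ℝ) + 1) * c (n + 1) * x ^ n := by
    rw [Summable.tsum_eq_zero_add hs2]
    simp only [Nat.cast_zero, zero_mul, mul_zero, zero_add]
    apply tsum_congr
    intro n
    simp only [Nat.add_sub_cancel]
    push_cast
    ring
  rwa [heq] at H


noncomputable def c0 (t : ℝ) (n : ℕ) : ℝ := A t n / n.factorial
noncomputable def c1 (t : ℝ) (n : ℕ) : ℝ := ((n:ℝ)+1) * c0 t (n+1)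
noncomputable def c2 (t : ℝ) (n : ℕ) : ℝ := ((n:ℝ)+1) * c1 t (n+1)
noncomputable def F (t : ℝ) (y : ℝ) : ℝ := ∑' n, c0 t n * y ^ n
noncomputable def F1 (t : ℝ) (y : ℝ) : ℝ := ∑' n, c1 t n * y ^ n
noncomputable def F2 (t : ℝ) (y : ℝ) : ℝ := ∑' n, c2 t n * y ^ n

lemma c0_nonneg {t : ℝ} (ht : 0 ≤ t) (n : ℕ) : 0 ≤ c0 t n :=
  div_nonneg (A_nonneg ht n) (by positivity)

lemma c0_le {t : ℝ} (ht0 : 0 ≤ t) (ht1 : t ≤ 1) (n : ℕ) : c0 t n ≤ Real.exp ((n:ℝ)+1) :=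
  A_div_le ht0 ht1 n

lemma c0_abs_le {t : ℝ} (ht0 : 0 ≤ t) (ht1 : t ≤ 1) (n : ℕ) : |c0 t n| ≤ Real.exp ((n:ℝ)+1) := by
  rw [abs_of_nonneg (c0_nonneg ht0 n)]; exact c0_le ht0 ht1 n

lemma c2_eq (t : ℝ) (n : ℕ) : c2 t n = (1 + (n:ℝ)^2 * t) * c0 t n := by
  have hf : ((n.factorial : ℝ)) ≠ 0 := by
    exact_mod_cast n.factorial_ne_zero
  have h1 : ((n:ℝ)+1) ≠ 0 := by positivity
  have h2 : ((n:ℝ)+2) ≠ 0 := by positivity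
  simp only [c2, c1, c0, A_rec, Nat.factorial_succ]
  push_cast
  field_simp

lemma hs1 {t : ℝ} (ht0 : 0 ≤ t) (ht1 : t ≤ 1) :
    Summable (fun n : ℕ => ((n:ℝ)+1) * |c0 t (n+1)| * (4⁻¹:ℝ)^n) := by
  apply summable_of_bound 1 1
  intro n
  rw [abs_of_nonneg (by positivity), one_mul, pow_one]
  have h : |c0 t (n+1)| ≤ Real.exp ((n:ℝ)+3) := by
    refine (c0_abs_le ht0 ht1 (n+1)).trans (Real.exp_le_exp.mpr ?_)
    push_cast; linarith
  have h4 : (0:ℝ) ≤ (4⁻¹:ℝ)^n := by positivity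
  have h5 : (0:ℝ) ≤ (n:ℝ)+1 := by positivity
  have h6 := abs_nonneg (c0 t (n+1))
  have h7 := (Real.exp_pos ((n:ℝ)+3)).le
  nlinarith [mul_le_mul (show ((n:ℝ)+1) ≤ (n:ℝ)+2 by linarith) h
      h6 (show (0:ℝ) ≤ (n:ℝ)+2 by positivity), mul_le_mul_of_nonneg_right
      (mul_le_mul (show ((n:ℝ)+1) ≤ (n:ℝ)+2 by linarith) h h6
        (show (0:ℝ) ≤ (n:ℝ)+2 by positivity)) h4]

lemma hs2 {t : ℝ} (ht0 : 0 ≤ t) (ht1 : t ≤ 1) :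
    Summable (fun n : ℕ => ((n:ℝ)+1) * |c1 t (n+1)| * (4⁻¹:ℝ)^n) := by
  apply summable_of_bound 2 1
  intro n
  rw [abs_of_nonneg (by positivity), one_mul]
  have h2 : |c0 t (n+1+1)| ≤ Real.exp ((n:ℝ)+3) := by
    refine (c0_abs_le ht0 ht1 (n+2)).trans (Real.exp_le_exp.mpr ?_)
    push_cast; linarith
  have h : |c1 t (n+1)| ≤ ((n:ℝ)+2) * Real.exp ((n:ℝ)+3) := by
    simp only [c1]
    rw [abs_mul, abs_of_nonneg (by positivity : (0:ℝ) ≤ ((n+1:ℕ):ℝ)+1)]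
    push_cast
    exact mul_le_mul (by linarith) h2 (abs_nonneg _) (by positivity)
  calc ((n:ℝ)+1) * |c1 t (n+1)| * (4⁻¹:ℝ)^n
      ≤ ((n:ℝ)+1) * (((n:ℝ)+2) * Real.exp ((n:ℝ)+3)) * (4⁻¹:ℝ)^n := by gcongr
    _ ≤ ((n:ℝ)+2)^2 * Real.exp ((n:ℝ)+3) * (4⁻¹:ℝ)^n := by
        have h4 : (0:ℝ) ≤ Real.exp ((n:ℝ)+3) := le_of_lt (Real.exp_pos _)
        have h5 : (0:ℝ) ≤ (4⁻¹:ℝ)^n := by positivity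
        have h6 : (0:ℝ) ≤ (n:ℝ) := Nat.cast_nonneg n
        nlinarith [mul_nonneg h4 h5, mul_nonneg (mul_nonneg h4 h5) h6]

lemma hasDerivAt_F {t : ℝ} (ht0 : 0 ≤ t) (ht1 : t ≤ 1) {x : ℝ}
    (hx : x ∈ Metric.ball (0:ℝ) 4⁻¹) : HasDerivAt (F t) (F1 t x) x := by
  have := hasDerivAt_series (c0 t) (hs1 ht0 ht1) hx
  exact this

lemma hasDerivAt_F1 {t : ℝ} (ht0 : 0 ≤ t) (ht1 : t ≤ 1) {x : ℝ}
    (hx : x ∈ Metric.ball (0:ℝ) 4⁻¹) : HasDerivAt (F1 t) (F2 t x) x := by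
  have := hasDerivAt_series (c1 t) (hs2 ht0 ht1) hx
  exact this

lemma F_zero (t : ℝ) : F t 0 = 1 := by
  rw [F, tsum_eq_single 0 (fun n hn => by simp [zero_pow hn])]
  simp [c0, A_zero]

lemma F1_zero (t : ℝ) : F1 t 0 = 1 := by
  rw [F1, tsum_eq_single 0 (fun n hn => by simp [zero_pow hn])]
  simp [c1, c0, A_one]


lemma ode_F {t : ℝ} (ht0 : 0 ≤ t) (ht1 : t ≤ 1) {x : ℝ} (hx : |x| ≤ 4⁻¹) :
    F2 t x = t * x^2 * F2 t x + t * x * F1 t x + F t x := by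
  have hxn : ∀ n : ℕ, |x| ^ n ≤ (4⁻¹:ℝ)^n := fun n => pow_le_pow_left₀ (abs_nonneg x) hx n
  set φ : ℕ → ℝ := fun n => t * (n:ℝ) * ((n:ℝ)-1) * c0 t n * x^n with hφ
  set ψ : ℕ → ℝ := fun n => t * (n:ℝ) * c0 t n * x^n with hψ
  have habs : ∀ n : ℕ, |c0 t n * x ^ n| ≤ Real.exp ((n:ℝ)+3) * (4⁻¹:ℝ)^n := by
    intro n
    rw [abs_mul, abs_pow]
    refine mul_le_mul ((c0_abs_le ht0 ht1 n).trans (Real.exp_le_exp.mpr (by linarith)))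
      (hxn n) (by positivity) (by positivity)
  have hT0 : Summable (fun n : ℕ => c0 t n * x ^ n) := by
    apply summable_of_bound 0 1
    intro n
    rw [pow_zero, one_mul, one_mul]
    exact habs n
  have htabs : |t| ≤ 1 := abs_le.mpr ⟨by linarith, ht1⟩
  have hφs : Summable φ := by
    apply summable_of_bound 2 1
    intro n
    rw [one_mul, hφ]
    have hn0 : (0:ℝ) ≤ (n:ℝ) := Nat.cast_nonneg n
    calc |t * (n:ℝ) * ((n:ℝ)-1) * c0 t n * x^n|
        = |t| * |(n:ℝ)| * |(n:ℝ)-1| * |c0 t n| * |x|^n := by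
          rw [abs_mul, abs_mul, abs_mul, abs_mul, abs_pow]
      _ ≤ 1 * ((n:ℝ)+2) * ((n:ℝ)+2) * Real.exp ((n:ℝ)+3) * (4⁻¹:ℝ)^n := by
          have m2 : |(n:ℝ)| ≤ (n:ℝ)+2 := by rw [abs_of_nonneg hn0]; linarith
          have m3 : |(n:ℝ)-1| ≤ (n:ℝ)+2 := abs_le.mpr ⟨by linarith, by linarith⟩
          have m4 : |c0 t n| ≤ Real.exp ((n:ℝ)+3) :=
            (c0_abs_le ht0 ht1 n).trans (Real.exp_le_exp.mpr (by linarith))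
          exact mul_le_mul (mul_le_mul (mul_le_mul (mul_le_mul htabs m2 (abs_nonneg _)
            (by norm_num)) m3 (abs_nonneg _) (by positivity)) m4 (abs_nonneg _)
            (by positivity)) (hxn n) (by positivity) (by positivity)
      _ = ((n:ℝ)+2)^2 * Real.exp ((n:ℝ)+3) * (4⁻¹:ℝ)^n := by ring
  have hφs1 : Summable (fun n => φ (n+1)) := (summable_nat_add_iff 1).mpr hφs
  have hψs : Summable ψ := by
    apply summable_of_bound 1 1
    intro n
    rw [one_mul, hψ, pow_one]
    have hn0 : (0:ℝ) ≤ (n:ℝ) := Nat.cast_nonneg n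
    calc |t * (n:ℝ) * c0 t n * x^n|
        = |t| * |(n:ℝ)| * |c0 t n| * |x|^n := by
          rw [abs_mul, abs_mul, abs_mul, abs_pow]
      _ ≤ 1 * ((n:ℝ)+2) * Real.exp ((n:ℝ)+3) * (4⁻¹:ℝ)^n := by
          have m2 : |(n:ℝ)| ≤ (n:ℝ)+2 := by rw [abs_of_nonneg hn0]; linarith
          have m4 : |c0 t n| ≤ Real.exp ((n:ℝ)+3) :=
            (c0_abs_le ht0 ht1 n).trans (Real.exp_le_exp.mpr (by linarith))
          exact mul_le_mul (mul_le_mul (mul_le_mul htabs m2 (abs_nonneg _)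
            (by norm_num)) m4 (abs_nonneg _) (by positivity)) (hxn n)
            (by positivity) (by positivity)
      _ = ((n:ℝ)+2) * Real.exp ((n:ℝ)+3) * (4⁻¹:ℝ)^n := by ring
  have K1 : (∑' n, φ n) = t * x^2 * F2 t x := by
    have e2 : ∀ n : ℕ, φ (n+1+1) = t*x^2 * (c2 t n * x^n) := by
      intro n
      simp only [hφ, c2, c1]
      push_cast
      ring
    have h0 : φ 0 = 0 := by simp [hφ]
    have h1 : φ (0+1) = 0 := by simp [hφ]
    rw [Summable.tsum_eq_zero_add hφs, Summable.tsum_eq_zero_add hφs1, tsum_congr e2, tsum_mul_left,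
      h0, h1, zero_add, zero_add]
    rfl
  have K2 : (∑' n, ψ n) = t * x * F1 t x := by
    have e2 : ∀ n : ℕ, ψ (n+1) = t*x * (c1 t n * x^n) := by
      intro n
      simp only [hψ, c1]
      push_cast
      ring
    have h0 : ψ 0 = 0 := by simp [hψ]
    rw [Summable.tsum_eq_zero_add hψs, tsum_congr e2, tsum_mul_left, h0, zero_add]
    rfl
  have hsum3 : ∀ n:ℕ, c2 t n * x^n = φ n + ψ n + c0 t n * x^n := by
    intro n
    rw [c2_eq]
    simp only [hφ, hψ]
    ring
  calc F2 t x = ∑' n, c2 t n * x^n := rfl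
    _ = ∑' n, (φ n + ψ n + c0 t n * x^n) := tsum_congr hsum3
    _ = ((∑' n, φ n) + ∑' n, ψ n) + ∑' n, c0 t n * x^n := by
        rw [Summable.tsum_add (hφs.add hψs) hT0, Summable.tsum_add hφs hψs]
    _ = t*x^2*F2 t x + t*x*F1 t x + F t x := by rw [K1, K2]; rfl


lemma M_deriv {t : ℝ} (ht0 : 0 ≤ t) (ht1 : t ≤ 1) {x : ℝ} (hx : |x| ≤ 5⁻¹) :
    HasDerivAt (fun y : ℝ => (Real.sqrt (1 - t*y^2))⁻¹)
      (t * x * ((Real.sqrt (1 - t*x^2))⁻¹)^3) x := by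
  have hx2 : x^2 ≤ 25⁻¹ := by
    have := sq_abs x
    nlinarith [abs_nonneg x]
  have hD : 0 < 1 - t*x^2 := by nlinarith
  have hs : 0 < Real.sqrt (1 - t*x^2) := Real.sqrt_pos.mpr hD
  have hsq : (Real.sqrt (1 - t*x^2))^2 = 1 - t*x^2 := Real.sq_sqrt hD.le
  have hgd : HasDerivAt (fun y : ℝ => 1 - t*y^2) (-(t*(2*x^1))) x :=
    (((hasDerivAt_pow 2 x).const_mul t).const_sub 1).congr_deriv (by push_cast; ring)
  have hsd : HasDerivAt (fun y : ℝ => Real.sqrt (1 - t*y^2))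
      (1 / (2 * Real.sqrt (1 - t*x^2)) * (-(t*(2*x^1)))) x :=
    (Real.hasDerivAt_sqrt hD.ne').comp x hgd
  have := hsd.inv hs.ne'
  refine this.congr_deriv ?_
  have h3 : (Real.sqrt (1 - t*x^2))^3 = Real.sqrt (1 - t*x^2) * (1 - t*x^2) := by
    calc (Real.sqrt (1 - t*x^2))^3
        = Real.sqrt (1 - t*x^2) * (Real.sqrt (1 - t*x^2))^2 := by ring
      _ = Real.sqrt (1 - t*x^2) * (1 - t*x^2) := by rw [hsq]
  rw [hsq]
  field_simp
  rw [hsq]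

lemma L_deriv {t : ℝ} (ht : 0 < t) (ht1 : t ≤ 1) {x : ℝ} (hx : |x| ≤ 5⁻¹) :
    HasDerivAt (fun y : ℝ => Real.exp (Real.arcsin (y * Real.sqrt t) / Real.sqrt t))
      (Real.exp (Real.arcsin (x * Real.sqrt t) / Real.sqrt t)
        * (Real.sqrt (1 - t*x^2))⁻¹) x := by
  have hx2 : x^2 ≤ 25⁻¹ := by
    have := sq_abs x
    nlinarith [abs_nonneg x]
  have hD : 0 < 1 - t*x^2 := by nlinarith
  have hs : 0 < Real.sqrt (1 - t*x^2) := Real.sqrt_pos.mpr hD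
  have hstpos : 0 < Real.sqrt t := Real.sqrt_pos.mpr ht
  have hst2 : (Real.sqrt t)^2 = t := Real.sq_sqrt ht.le
  have hst1 : Real.sqrt t ≤ 1 := by
    rw [show (1:ℝ) = Real.sqrt 1 from Real.sqrt_one.symm]
    exact Real.sqrt_le_sqrt ht1
  have hxst : |x * Real.sqrt t| < 1 := by
    rw [abs_mul, abs_of_nonneg hstpos.le]
    nlinarith [abs_nonneg x]
  have hne1 : x * Real.sqrt t ≠ -1 := by
    intro h; rw [h] at hxst; norm_num at hxst
  have hne2 : x * Real.sqrt t ≠ 1 := by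
    intro h; rw [h] at hxst; norm_num at hxst
  have ha1 : HasDerivAt (fun y : ℝ => y * Real.sqrt t) (Real.sqrt t) x :=
    hasDerivAt_mul_const _
  have ha2 : HasDerivAt (fun y : ℝ => Real.arcsin (y * Real.sqrt t))
      (1 / Real.sqrt (1 - (x * Real.sqrt t)^2) * Real.sqrt t) x :=
    by have := (Real.hasDerivAt_arcsin hne1 hne2).comp x ha1; exact this
  have hrw : 1 - (x * Real.sqrt t)^2 = 1 - t*x^2 := by
    rw [mul_pow, hst2]; ring
  rw [hrw] at ha2
  have ha3 := (ha2.div_const (Real.sqrt t)).exp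
  refine ha3.congr_deriv ?_
  field_simp
end EgfAux

/-- The exponential generating function identity
`exp(arcsin(u√t)/√t) = Σ_{n≥0} (∏_{0≤k<(n-2)/2} (1+(n-2-2k)²t)) uⁿ/n!`,
as an identity of real-analytic functions for small `u` and small `t > 0`.
Note that the number of integers `k` with `0 ≤ k < (n-2)/2` is `(n-1)/2` (natural division). -/
theorem egf_identity :
    ∃ ε : ℝ, 0 < ε ∧ ∀ t u : ℝ, 0 < t → t < ε → |u| < ε →
      Real.exp (Real.arcsin (u * Real.sqrt t) / Real.sqrt t) =
        ∑' n : ℕ,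
          (∏ k ∈ Finset.range ((n - 1) / 2), (1 + ((n : ℝ) - 2 - 2 * k) ^ 2 * t))
            * u ^ n / (Nat.factorial n) := by
  refine ⟨8⁻¹, by norm_num, ?_⟩
  intro t u ht htε huε
  have ht0 : 0 ≤ t := ht.le
  have ht1 : t ≤ 1 := by
    have : (8⁻¹:ℝ) ≤ 1 := by norm_num
    linarith
  set cl : ℝ → ℝ := fun y => max (-(5⁻¹:ℝ)) (min 5⁻¹ y) with hcl
  set v : ℝ → ℝ × ℝ → ℝ × ℝ :=
    fun y p => (p.2, (t * cl y * p.2 + p.1) / (1 - t * (cl y)^2)) with hvdef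
  have hclb : ∀ y, |cl y| ≤ 5⁻¹ := by
    intro y
    rw [abs_le]
    exact ⟨le_max_left _ _, max_le (by norm_num) (min_le_left _ _)⟩
  have hcld : ∀ y, (2⁻¹:ℝ) ≤ 1 - t * (cl y)^2 := by
    intro y
    have h := hclb y
    have h2 : (cl y)^2 ≤ (5⁻¹:ℝ)^2 := by
      rw [← sq_abs]
      exact pow_le_pow_left₀ (abs_nonneg _) h 2
    nlinarith
  have hLip : ∀ y, LipschitzWith 4 (v y) := by
    intro y
    apply LipschitzWith.of_dist_le_mul
    intro p q
    have hD2 := hcld y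
    have hDpos : (0:ℝ) < 1 - t*(cl y)^2 := by linarith
    have htc : |t * cl y| ≤ 1 := by
      rw [abs_mul, abs_of_nonneg ht0]
      nlinarith [hclb y, abs_nonneg (cl y)]
    have h1 : |p.1 - q.1| ≤ dist p q := by
      rw [Prod.dist_eq, ← Real.dist_eq]
      exact le_max_left _ _
    have h2 : |p.2 - q.2| ≤ dist p q := by
      rw [Prod.dist_eq, ← Real.dist_eq]
      exact le_max_right _ _
    have hd0 : (0:ℝ) ≤ dist p q := dist_nonneg
    have hK : (((4:NNReal)):ℝ) = 4 := by norm_num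
    rw [hK, Prod.dist_eq]
    apply max_le
    · have : dist (v y p).1 (v y q).1 = |p.2 - q.2| := by
        simp only [hvdef]
        rw [Real.dist_eq]
      rw [this]
      linarith
    · have heq2 : (v y p).2 - (v y q).2
          = (t * cl y * (p.2 - q.2) + (p.1 - q.1)) / (1 - t * (cl y)^2) := by
        show (t * cl y * p.2 + p.1) / (1 - t * (cl y)^2)
            - (t * cl y * q.2 + q.1) / (1 - t * (cl y)^2) = _
        rw [div_sub_div_same]
        congr 1
        ring
      rw [Real.dist_eq, heq2, abs_div, abs_of_pos hDpos, div_le_iff₀ hDpos]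
      have hnum : |t * cl y * (p.2 - q.2) + (p.1 - q.1)| ≤ 2 * dist p q := by
        calc |t * cl y * (p.2 - q.2) + (p.1 - q.1)|
            ≤ |t * cl y * (p.2 - q.2)| + |p.1 - q.1| := abs_add_le _ _
          _ ≤ |p.2 - q.2| + |p.1 - q.1| := by
              rw [abs_mul]
              nlinarith [abs_nonneg (p.2 - q.2), abs_nonneg (t * cl y)]
          _ ≤ 2 * dist p q := by linarith
      nlinarith
  have hFsol : ∀ x ∈ Set.Ioo (-(5⁻¹:ℝ)) 5⁻¹,
      HasDerivAt (fun y => (EgfAux.F t y, EgfAux.F1 t y))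
        (v x (EgfAux.F t x, EgfAux.F1 t x)) x := by
    intro x hx
    have hx1 : -(5⁻¹:ℝ) < x := hx.1
    have hx2 : x < 5⁻¹ := hx.2
    have c45 : (5⁻¹:ℝ) < 4⁻¹ := by norm_num
    have hxabs : |x| ≤ 4⁻¹ := abs_le.mpr ⟨by linarith, by linarith⟩
    have hball : x ∈ Metric.ball (0:ℝ) 4⁻¹ := by
      rw [Metric.mem_ball, Real.dist_eq, sub_zero, abs_lt]
      constructor <;> linarith
    have hclx : cl x = x := by
      simp only [hcl]
      rw [min_eq_right hx2.le, max_eq_right hx1.le]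
    have hDpos : (0:ℝ) < 1 - t*x^2 := by
      have := hcld x
      rw [hclx] at this
      linarith
    have h1 := EgfAux.hasDerivAt_F ht0 ht1 hball
    have h2 := EgfAux.hasDerivAt_F1 ht0 ht1 hball
    have hode := EgfAux.ode_F ht0 ht1 hxabs
    have hval : v x (EgfAux.F t x, EgfAux.F1 t x)
        = (EgfAux.F1 t x, EgfAux.F2 t x) := by
      simp only [hvdef, hclx]
      refine Prod.ext rfl ?_
      show (t * x * EgfAux.F1 t x + EgfAux.F t x) / (1 - t * x^2) = EgfAux.F2 t x
      rw [div_eq_iff hDpos.ne']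
      linear_combination -hode
    rw [hval]
    exact h1.prodMk h2
  have hLsol : ∀ x ∈ Set.Ioo (-(5⁻¹:ℝ)) 5⁻¹,
      HasDerivAt (fun y => (Real.exp (Real.arcsin (y * Real.sqrt t) / Real.sqrt t),
          Real.exp (Real.arcsin (y * Real.sqrt t) / Real.sqrt t)
            * (Real.sqrt (1 - t*y^2))⁻¹))
        (v x (Real.exp (Real.arcsin (x * Real.sqrt t) / Real.sqrt t),
          Real.exp (Real.arcsin (x * Real.sqrt t) / Real.sqrt t)
            * (Real.sqrt (1 - t*x^2))⁻¹)) x := by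
    intro x hx
    have hxabs5 : |x| ≤ 5⁻¹ := abs_le.mpr ⟨hx.1.le, hx.2.le⟩
    have hclx : cl x = x := by
      simp only [hcl]
      rw [min_eq_right hx.2.le, max_eq_right hx.1.le]
    have hDpos : (0:ℝ) < 1 - t*x^2 := by
      have := hcld x
      rw [hclx] at this
      linarith
    have hspos : 0 < Real.sqrt (1 - t*x^2) := Real.sqrt_pos.mpr hDpos
    have hsq : (Real.sqrt (1 - t*x^2))^2 = 1 - t*x^2 := Real.sq_sqrt hDpos.le
    have hL := EgfAux.L_deriv ht ht1 hxabs5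
    have hN := EgfAux.M_deriv ht0 ht1 hxabs5
    have hprod := hL.mul hN
    have h3 := hL.prodMk hprod
    have hval : v x (Real.exp (Real.arcsin (x * Real.sqrt t) / Real.sqrt t),
          Real.exp (Real.arcsin (x * Real.sqrt t) / Real.sqrt t)
            * (Real.sqrt (1 - t*x^2))⁻¹)
        = (Real.exp (Real.arcsin (x * Real.sqrt t) / Real.sqrt t)
            * (Real.sqrt (1 - t*x^2))⁻¹,
          Real.exp (Real.arcsin (x * Real.sqrt t) / Real.sqrt t)
              * (Real.sqrt (1 - t*x^2))⁻¹ * (Real.sqrt (1 - t*x^2))⁻¹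
            + Real.exp (Real.arcsin (x * Real.sqrt t) / Real.sqrt t)
              * (t * x * ((Real.sqrt (1 - t*x^2))⁻¹)^3)) := by
      simp only [hvdef, hclx]
      refine Prod.ext rfl ?_
      show (t * x * (Real.exp (Real.arcsin (x * Real.sqrt t) / Real.sqrt t)
            * (Real.sqrt (1 - t*x^2))⁻¹)
          + Real.exp (Real.arcsin (x * Real.sqrt t) / Real.sqrt t)) / (1 - t * x^2) = _
      set s := Real.sqrt (1 - t*x^2) with hs
      rw [← hsq]
      field_simp
      ring
    rw [hval]
    exact h3
  have hinit : ((EgfAux.F t 0, EgfAux.F1 t 0) : ℝ × ℝ)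
      = (Real.exp (Real.arcsin ((0:ℝ) * Real.sqrt t) / Real.sqrt t),
         Real.exp (Real.arcsin ((0:ℝ) * Real.sqrt t) / Real.sqrt t)
           * (Real.sqrt (1 - t*(0:ℝ)^2))⁻¹) := by
    rw [EgfAux.F_zero, EgfAux.F1_zero]
    norm_num [Real.arcsin_zero, Real.sqrt_one]
  have key := ODE_solution_unique_of_mem_Ioo (K := 4) (v := v)
      (s := fun _ => (Set.univ : Set (ℝ × ℝ)))
      (fun y _ => (hLip y).lipschitzOnWith)
      (show (0:ℝ) ∈ Set.Ioo (-(5⁻¹:ℝ)) 5⁻¹ by norm_num)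
      (fun x hx => ⟨hFsol x hx, Set.mem_univ _⟩)
      (fun x hx => ⟨hLsol x hx, Set.mem_univ _⟩)
      hinit
  have hu : u ∈ Set.Ioo (-(5⁻¹:ℝ)) 5⁻¹ := by
    have h58 : (8⁻¹:ℝ) < 5⁻¹ := by norm_num
    have := abs_lt.mp huε
    rw [Set.mem_Ioo]
    constructor <;> linarith
  have hFL := key hu
  have hF : EgfAux.F t u = Real.exp (Real.arcsin (u * Real.sqrt t) / Real.sqrt t) :=
    congrArg Prod.fst hFL
  have hsum : (∑' n : ℕ,
      (∏ k ∈ Finset.range ((n - 1) / 2), (1 + ((n : ℝ) - 2 - 2 * k) ^ 2 * t))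
        * u ^ n / (Nat.factorial n)) = EgfAux.F t u := by
    apply tsum_congr
    intro n
    show _ = EgfAux.c0 t n * u ^ n
    rw [EgfAux.c0, EgfAux.A]
    ring
  rw [hsum, ← hF]
end

section
/- The function (u/k + √(1+u²/k²))^k, for a positive integer k, is the sum of a polynomial in u of degree k and a function f satisfying f(u) = (-1)^{k+1} f(-u). Consequently, if n - k is an even positive integer, the n-th derivative at u = 0 of (u/k + √(1+u²/k²))^k vanishes. -/
open Polynomial Finset

lemma aux_contDiff_polyEval (p : ℝ[X]) (n : ℕ∞) : ContDiff ℝ n fun x : ℝ => p.eval x := by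
  have h : (fun x : ℝ => p.eval x)
      = fun x => ∑ i ∈ Finset.range (p.natDegree + 1), p.coeff i * x ^ i :=
    funext fun x => eval_eq_sum_range x
  rw [h]
  exact ContDiff.sum fun i _ => contDiff_const.mul (contDiff_id.pow i)

lemma aux_iteratedDeriv_add {n : ℕ} {f g : ℝ → ℝ} (hf : ContDiff ℝ n f) (hg : ContDiff ℝ n g)
    (x : ℝ) :
    iteratedDeriv n (fun y => f y + g y) x = iteratedDeriv n f x + iteratedDeriv n g x := by
  simp only [iteratedDeriv_eq_iteratedFDeriv, iteratedFDeriv_add_apply' (x := x) hf.contDiffAt hg.contDiffAt,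
    ContinuousMultilinearMap.add_apply]

lemma aux_iteratedDeriv_const_mul {n : ℕ} {f : ℝ → ℝ} (hf : ContDiff ℝ n f) (c : ℝ) (x : ℝ) :
    iteratedDeriv n (fun y => c * f y) x = c * iteratedDeriv n f x := by
  have h := iteratedFDeriv_const_smul_apply' (𝕜 := ℝ) (a := c) (f := f) (x := x) hf.contDiffAt
  simp only [iteratedDeriv_eq_iteratedFDeriv, smul_eq_mul] at h ⊢
  rw [h]; rfl

lemma aux_iteratedDeriv_poly (n : ℕ) (p : ℝ[X]) :
    iteratedDeriv n (fun x : ℝ => p.eval x) = fun x => (derivative^[n] p).eval x := by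
  induction n generalizing p with
  | zero => simp
  | succ n ih =>
    rw [iteratedDeriv_succ', show deriv (fun x : ℝ => p.eval x)
        = fun x => (derivative p).eval x from funext fun _ => p.deriv, ih,
      Function.iterate_succ_apply]

/-- The function `g(u) = (u/k + √(1+u²/k²))^k`, for a positive integer `k`, is the sum of a
polynomial in `u` of degree `k` and a function `f` satisfying `f(u) = (-1)^{k+1} f(-u)`.
Consequently, if `n - k` is an even positive integer, the `n`-th derivative of `g` at `u = 0`
vanishes. -/
theorem poly_plus_parity_and_deriv_vanish (k : ℕ) (hk : 0 < k) :
    (∃ (p : Polynomial ℝ) (f : ℝ → ℝ),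
        p.natDegree = k ∧
        (∀ u : ℝ, (u / k + Real.sqrt (1 + u ^ 2 / (k : ℝ) ^ 2)) ^ k = p.eval u + f u) ∧
        (∀ u : ℝ, f u = (-1 : ℝ) ^ (k + 1) * f (-u))) ∧
    ∀ n : ℕ, k < n → Even (n - k) →
      iteratedDeriv n (fun u : ℝ => (u / k + Real.sqrt (1 + u ^ 2 / (k : ℝ) ^ 2)) ^ k) 0 = 0 := by
  set K : ℝ := (k : ℝ) with hKdef
  have hK : (0 : ℝ) < K := by rw [hKdef]; exact_mod_cast hk
  have hK0 : K ≠ 0 := ne_of_gt hK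
  set a : ℝ := 1 / K with ha
  have ha0 : a ≠ 0 := one_div_ne_zero hK0
  set b : ℝ → ℝ := fun u => Real.sqrt (1 + u ^ 2 / K ^ 2) with hbdef
  have hpos : ∀ u : ℝ, (0 : ℝ) < 1 + u ^ 2 / K ^ 2 := fun u => by positivity
  have hb2 : ∀ u : ℝ, b u ^ 2 = 1 + u ^ 2 / K ^ 2 := fun u =>
    Real.sq_sqrt (hpos u).le
  have hbneg : ∀ u : ℝ, b (-u) = b u := fun u => by simp [hbdef]
  -- the binomial expansion
  have hbin : ∀ u : ℝ, (u / K + b u) ^ k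
      = ∑ j ∈ range (k + 1), (u / K) ^ j * b u ^ (k - j) * (k.choose j : ℝ) :=
    fun u => add_pow _ _ _
  -- the polynomial
  set q : ℝ[X] := C (a ^ 2) * X ^ 2 + 1 with hq
  have hq0 : q ≠ 0 := fun h => by
    have := congrArg (eval 0) h
    simp [hq] at this
  have hqdeg : q.natDegree = 2 := by
    rw [hq]
    compute_degree!
  have hqlead : q.leadingCoeff = a ^ 2 := by
    rw [leadingCoeff, hqdeg, hq, coeff_add, coeff_C_mul, coeff_X_pow, coeff_one]
    norm_num
  set T : ℕ → ℝ[X] := fun j =>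
    (C a * X) ^ j * q ^ ((k - j) / 2) * C ((k.choose j : ℝ)) with hT
  set p : ℝ[X] := ∑ j ∈ range (k + 1), if Even (k - j) then T j else 0 with hp
  -- degree computations
  have hTdeg : ∀ j, j ≤ k → Even (k - j) → (T j).natDegree = k := by
    intro j hj ⟨m, hm⟩
    have h1 : ((C a * X) ^ j).natDegree = j := by
      rw [natDegree_pow, natDegree_C_mul_X a ha0, mul_one]
    have h2 : (q ^ ((k - j) / 2)).natDegree = k - j := by
      rw [natDegree_pow, hqdeg]
      omega
    have hn1 : (C a * X) ^ j ≠ 0 := pow_ne_zero _ (by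
      intro h
      have := congrArg (eval 1) h
      simp [ha0] at this)
    have hn2 : q ^ ((k - j) / 2) ≠ 0 := pow_ne_zero _ hq0
    have hc0 : (k.choose j : ℝ) ≠ 0 := Nat.cast_ne_zero.2 (Nat.choose_pos hj).ne'
    rw [hT]
    rw [natDegree_mul (mul_ne_zero hn1 hn2) (by simpa using hc0),
      natDegree_mul hn1 hn2, h1, h2, natDegree_C]
    omega
  have hTlead : ∀ j, j ≤ k → Even (k - j) → (T j).coeff k = a ^ k * (k.choose j : ℝ) := by
    intro j hj hev
    have hd := hTdeg j hj hev
    have : (T j).coeff k = (T j).leadingCoeff := by rw [leadingCoeff, hd]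
    rw [this, hT]
    rw [leadingCoeff_mul, leadingCoeff_mul, leadingCoeff_pow, leadingCoeff_pow, hqlead,
      leadingCoeff_C]
    have hla : (C a * X).leadingCoeff = a := by
      simp [leadingCoeff_mul]
    rw [hla, ← pow_mul]
    obtain ⟨m, hm⟩ := hev
    have : j + 2 * ((k - j) / 2) = k := by omega
    rw [show 2 * ((k - j) / 2) = k - j by omega, ← pow_add,
      show j + (k - j) = k by omega]
  have hpcoeff : p.coeff k = ∑ j ∈ range (k + 1),
      (if Even (k - j) then a ^ k * (k.choose j : ℝ) else 0) := by
    rw [hp, finset_sum_coeff]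
    refine Finset.sum_congr rfl fun j hj => ?_
    by_cases hev : Even (k - j)
    · rw [if_pos hev, if_pos hev, hTlead j (by simpa using Nat.lt_succ_iff.mp (mem_range.mp hj)) hev]
    · simp [hev]
  have hpk : p.coeff k ≠ 0 := by
    rw [hpcoeff]
    have hposk : (0:ℝ) < a ^ k := pow_pos (by positivity) k
    have : (0:ℝ) < ∑ j ∈ range (k + 1),
        (if Even (k - j) then a ^ k * (k.choose j : ℝ) else 0) := by
      refine Finset.sum_pos' (fun j hj => ?_) ⟨k, mem_range.mpr (Nat.lt_succ_self k), ?_⟩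
      · by_cases hev : Even (k - j)
        · rw [if_pos hev]
          have := Nat.choose_pos (Nat.lt_succ_iff.mp (mem_range.mp hj))
          positivity
        · simp [hev]
      · simp only [Nat.sub_self, Even.zero, if_pos, Nat.choose_self, Nat.cast_one, mul_one]
        exact hposk
    exact this.ne'
  have hpdeg : p.natDegree = k := by
    refine le_antisymm ?_ (le_natDegree_of_ne_zero hpk)
    refine natDegree_sum_le_of_forall_le _ _ fun j hj => ?_
    by_cases hev : Even (k - j)
    · rw [if_pos hev, hTdeg j (Nat.lt_succ_iff.mp (mem_range.mp hj)) hev]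
    · simp [hev]
  -- eval of p
  have hTeval : ∀ j u, j ≤ k → Even (k - j) → (T j).eval u
      = (u / K) ^ j * b u ^ (k - j) * (k.choose j : ℝ) := by
    intro j u hj hev
    obtain ⟨m, hm⟩ := hev
    have hkj : k - j = 2 * ((k - j) / 2) := by omega
    rw [hT]
    simp only [hq, eval_mul, eval_pow, eval_C, eval_X, eval_add, eval_one]
    have hbu : b u ^ (k - j) = (1 + u ^ 2 / K ^ 2) ^ ((k - j) / 2) := by
      conv_lhs => rw [hkj]
      rw [pow_mul, hb2]
    rw [hbu]
    have e1 : a * u = u / K := by rw [ha]; ring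
    have e2 : a ^ 2 * u ^ 2 + 1 = 1 + u ^ 2 / K ^ 2 := by rw [ha]; ring
    rw [e1, e2]
  have hpeval : ∀ u : ℝ, p.eval u = ∑ j ∈ range (k + 1),
      (if Even (k - j) then (u / K) ^ j * b u ^ (k - j) * (k.choose j : ℝ) else 0) := by
    intro u
    rw [hp, eval_finset_sum]
    refine Finset.sum_congr rfl fun j hj => ?_
    by_cases hev : Even (k - j)
    · rw [if_pos hev, if_pos hev,
        hTeval j u (Nat.lt_succ_iff.mp (mem_range.mp hj)) hev]
    · simp [hev]
  -- the odd part
  set f : ℝ → ℝ := fun u => ∑ j ∈ range (k + 1),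
      (if ¬ Even (k - j) then (u / K) ^ j * b u ^ (k - j) * (k.choose j : ℝ) else 0) with hf
  have hsplit : ∀ u : ℝ, (u / K + b u) ^ k = p.eval u + f u := by
    intro u
    rw [hbin u, hpeval u, hf, ← Finset.sum_add_distrib]
    refine Finset.sum_congr rfl fun j _ => ?_
    by_cases hev : Even (k - j) <;> simp [hev]
  -- parity of f
  have hparity : ∀ u : ℝ, f u = (-1 : ℝ) ^ (k + 1) * f (-u) := by
    intro u
    rw [hf]
    simp only
    rw [Finset.mul_sum]
    refine Finset.sum_congr rfl fun j hj => ?_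
    by_cases hev : Even (k - j)
    · simp [hev]
    · rw [if_pos hev, if_pos hev]
      have hj' : j ≤ k := Nat.lt_succ_iff.mp (mem_range.mp hj)
      have hodd : Odd (k - j) := Nat.odd_iff.mpr (Nat.not_even_iff.mp hev)
      obtain ⟨m, hm⟩ := hodd
      have hneg : (-u / K) ^ j = (-1 : ℝ) ^ j * (u / K) ^ j := by
        rw [neg_div, neg_pow]
      rw [hbneg u, hneg]
      have hone : (-1 : ℝ) ^ (k + 1) * (-1 : ℝ) ^ j = 1 := by
        rw [← pow_add, show k + 1 + j = 2 * (j + m + 1) by omega, pow_mul]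
        norm_num
      calc (u / K) ^ j * b u ^ (k - j) * (k.choose j : ℝ)
          = ((-1 : ℝ) ^ (k + 1) * (-1 : ℝ) ^ j) * ((u / K) ^ j * b u ^ (k - j) * (k.choose j : ℝ)) := by
            rw [hone, one_mul]
        _ = (-1 : ℝ) ^ (k + 1) * ((-1 : ℝ) ^ j * (u / K) ^ j * b u ^ (k - j) * (k.choose j : ℝ)) := by
            ring
  -- smoothness of f
  have hbcd : ∀ n : ℕ, ContDiff ℝ n b := by
    intro n
    refine ContDiff.sqrt ?_ fun x => (hpos x).ne'
    exact contDiff_const.add ((contDiff_id.pow 2).div_const _)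
  have hfcd : ∀ n : ℕ, ContDiff ℝ n f := by
    intro n
    rw [hf]
    refine ContDiff.sum fun j _ => ?_
    by_cases hev : Even (k - j)
    · simp only [hev, not_true_eq_false, if_false]
      exact contDiff_const
    · simp only [hev, not_false_eq_true, if_true]
      exact (((contDiff_id.div_const K).pow j).mul ((hbcd n).pow (k - j))).mul contDiff_const
  constructor
  · exact ⟨p, f, hpdeg, fun u => hsplit u, hparity⟩
  · intro n hn hev
    have hgfun : (fun u : ℝ => (u / K + Real.sqrt (1 + u ^ 2 / K ^ 2)) ^ k)
        = fun u => p.eval u + f u := funext fun u => hsplit u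
    rw [show (fun u : ℝ => (u / (k:ℝ) + Real.sqrt (1 + u ^ 2 / (k : ℝ) ^ 2)) ^ k)
        = fun u => p.eval u + f u from hgfun]
    rw [aux_iteratedDeriv_add (aux_contDiff_polyEval p n) (hfcd n) 0]
    have h1 : iteratedDeriv n (fun x : ℝ => p.eval x) 0 = 0 := by
      rw [aux_iteratedDeriv_poly]
      rw [iterate_derivative_eq_zero (by omega : p.natDegree < n)]
      simp
    have h2 : iteratedDeriv n f 0 = 0 := by
      have hfeq : f = fun u => (-1 : ℝ) ^ (k + 1) * f (-u) := funext hparity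
      have hcomp : ContDiff ℝ n fun u : ℝ => f (-u) := (hfcd n).comp contDiff_neg
      have step : iteratedDeriv n f 0
          = (-1 : ℝ) ^ (k + 1) * iteratedDeriv n (fun u : ℝ => f (-u)) 0 := by
        conv_lhs => rw [hfeq]
        exact aux_iteratedDeriv_const_mul hcomp _ 0
      rw [iteratedDeriv_comp_neg, neg_zero, smul_eq_mul, ← mul_assoc, ← pow_add] at step
      have hsign : (-1 : ℝ) ^ (k + 1 + n) = -1 := by
        obtain ⟨m, hm⟩ := hev
        rw [show k + 1 + n = 2 * (k + m) + 1 by omega, pow_succ, pow_mul]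
        norm_num
      rw [hsign] at step
      linarith
    rw [h1, h2, add_zero]
end

section
/- Every connected component of a triangle forest has an odd number of vertices. More precisely, if a triangle forest has n vertices, d triangles, and its incidence (bipartite) graph is a forest, then it has exactly n - 2d connected components, and each component with dᵢ triangles has 2dᵢ + 1 vertices. -/
section TriangleGraphs

variable {α : Type*} [DecidableEq α]

/-- A triangle graph on the vertex set `V`: each edge is a 3-element subset of `V`. -/
def IsTriangleGraph (V : Finset α) (E : Finset (Finset α)) : Prop :=
  ∀ e ∈ E, e.card = 3 ∧ e ⊆ V

/-- The edge set `E` contains a cycle: a path of length `> 1` from a vertex to itself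
consisting of distinct edges and distinct vertices. -/
def HasTriCycle (E : Finset (Finset α)) : Prop :=
  ∃ (n : ℕ) (e : ℕ → Finset α) (v : ℕ → α),
    1 < n ∧
    (∀ i, 1 ≤ i → i ≤ n → e i ∈ E) ∧
    (∀ i j, 1 ≤ i → i < j → j ≤ n → e i ≠ e j) ∧
    (∀ i j, i < j → j < n → v i ≠ v j) ∧
    v n = v 0 ∧ v 0 ∈ e 1 ∧ v n ∈ e n ∧
    (∀ i, 0 < i → i < n → v i ∈ e i ∧ v i ∈ e (i + 1))

/-- Two vertices lie on a common edge. -/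
def TriStep (E : Finset (Finset α)) (x y : α) : Prop := ∃ e ∈ E, x ∈ e ∧ y ∈ e

/-- Reachability (connectivity) in a triangle graph. -/
def TriReach (E : Finset (Finset α)) : α → α → Prop := Relation.ReflTransGen (TriStep E)

/-- A triangle tree: a connected triangle graph without cycles. -/
def IsTriangleTree (V : Finset α) (E : Finset (Finset α)) : Prop :=
  IsTriangleGraph V E ∧ ¬ HasTriCycle E ∧ V.Nonempty ∧
    ∀ x ∈ V, ∀ y ∈ V, TriReach E x y

end TriangleGraphs



namespace TF
variable {α : Type*} [DecidableEq α]

lemma triStep_symm {E : Finset (Finset α)} {x y : α} (h : TriStep E x y) : TriStep E y x := by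
  obtain ⟨e, he, hx, hy⟩ := h; exact ⟨e, he, hy, hx⟩

lemma triReach_symm {E : Finset (Finset α)} {x y : α} (h : TriReach E x y) : TriReach E y x :=
  haveI : Std.Symm (TriStep E) := ⟨fun _ _ => triStep_symm⟩
  Relation.ReflTransGen.symmetric.symm _ _ h

lemma triReach_trans {E : Finset (Finset α)} {x y z : α} (h : TriReach E x y)
    (h' : TriReach E y z) : TriReach E x z := Relation.ReflTransGen.trans h h'

lemma triStep_mono {E E' : Finset (Finset α)} (hE : E' ⊆ E) {x y : α} (h : TriStep E' x y) :
    TriStep E x y := by obtain ⟨e, he, hx, hy⟩ := h; exact ⟨e, hE he, hx, hy⟩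

lemma triReach_mono {E E' : Finset (Finset α)} (hE : E' ⊆ E) {x y : α} (h : TriReach E' x y) :
    TriReach E x y := Relation.ReflTransGen.mono (fun _ _ => triStep_mono hE) _ _ h

lemma hasTriCycle_mono {E E' : Finset (Finset α)} (hE : E' ⊆ E) (h : HasTriCycle E') :
    HasTriCycle E := by
  obtain ⟨n, e, v, h1, h2, h⟩ := h
  exact ⟨n, e, v, h1, fun i hi hi' => hE (h2 i hi hi'), h⟩

/-- A walk of length `n` from `x` to `y`. -/
def Walk (E : Finset (Finset α)) (x y : α) (n : ℕ) : Prop :=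
  ∃ (e : ℕ → Finset α) (v : ℕ → α), v 0 = x ∧ v n = y ∧
    ∀ i, 1 ≤ i → i ≤ n → e i ∈ E ∧ v (i - 1) ∈ e i ∧ v i ∈ e i

lemma triReach_walk {E : Finset (Finset α)} {x y : α} (h : TriReach E x y) :
    ∃ n, Walk E x y n := by
  induction h with
  | refl => exact ⟨0, fun _ => ∅, fun _ => x, rfl, rfl, fun i hi hi' => by omega⟩
  | @tail b c _ hbc ih =>
    obtain ⟨n, e, v, hv0, hvn, hw⟩ := ih
    obtain ⟨f, hf, hb, hc⟩ := hbc
    refine ⟨n + 1, fun i => if i ≤ n then e i else f,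
      fun i => if i ≤ n then v i else c, by simp [hv0], by simp, ?_⟩
    intro i hi hi'
    rcases Nat.lt_or_ge i (n + 1) with h | h
    · have hin : i ≤ n := by omega
      simp only [hin, if_pos, if_pos (show i - 1 ≤ n by omega)]
      exact hw i hi hin
    · have : i = n + 1 := by omega
      subst this
      simp only [Nat.add_sub_cancel, le_refl, if_pos, if_neg (by omega : ¬ n + 1 ≤ n)]
      exact ⟨hf, hvn ▸ hb, hc⟩

end TF


set_option linter.unusedSectionVars false
namespace TF
variable {α : Type*} [DecidableEq α]

lemma shortcut_vertex {E : Finset (Finset α)} {x y : α} {n : ℕ} {e : ℕ → Finset α} {v : ℕ → α}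
    (hv0 : v 0 = x) (hvn : v n = y)
    (hw : ∀ i, 1 ≤ i → i ≤ n → e i ∈ E ∧ v (i - 1) ∈ e i ∧ v i ∈ e i)
    {i j : ℕ} (hij : i < j) (hjn : j ≤ n) (hvij : v i = v j) :
    Walk E x y (n - (j - i)) := by
  set m := n - (j - i) with hm
  refine ⟨fun k => if k ≤ i then e k else e (k + (j - i)),
    fun k => if k ≤ i then v k else v (k + (j - i)), by simpa using hv0, ?_, ?_⟩
  · by_cases h : m ≤ i
    · have hji : j = n := by omega
      have hmi : m = i := by omega
      simp only [if_pos h, hmi, hvij, hji, hvn]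
      simp
    · have : m + (j - i) = n := by omega
      simp only [if_neg h, this, hvn]
  · intro k hk1 hkm
    by_cases h : k ≤ i
    · have h1 : k - 1 ≤ i := by omega
      simp only [if_pos h, if_pos h1]
      exact hw k hk1 (by omega)
    · have hK1 : 1 ≤ k + (j - i) := by omega
      have hKn : k + (j - i) ≤ n := by omega
      obtain ⟨he, hv1, hv2⟩ := hw (k + (j - i)) hK1 hKn
      simp only [if_neg h]
      by_cases h1 : k - 1 ≤ i
      · have hki : k = i + 1 := by omega
        have : k + (j - i) - 1 = j := by omega
        rw [this] at hv1
        have hkv : k - 1 = i := by omega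
        refine ⟨he, ?_, hv2⟩
        rw [if_pos h1, hkv, hvij]
        exact hv1
      · have : k - 1 + (j - i) = k + (j - i) - 1 := by omega
        simp only [if_neg h1, this]
        exact ⟨he, hv1, hv2⟩

lemma shortcut_edge {E : Finset (Finset α)} {x y : α} {n : ℕ} {e : ℕ → Finset α} {v : ℕ → α}
    (hv0 : v 0 = x) (hvn : v n = y)
    (hw : ∀ i, 1 ≤ i → i ≤ n → e i ∈ E ∧ v (i - 1) ∈ e i ∧ v i ∈ e i)
    {i j : ℕ} (hi1 : 1 ≤ i) (hij : i < j) (hjn : j ≤ n) (heij : e i = e j) :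
    Walk E x y (n - (j - i)) := by
  set m := n - (j - i) with hm
  refine ⟨fun k => if k < i then e k else e (k + (j - i)),
    fun k => if k < i then v k else v (k + (j - i)), ?_, ?_, ?_⟩
  · simp only [if_pos (show 0 < i by omega), hv0]
  · have h : ¬ m < i := by omega
    have : m + (j - i) = n := by omega
    simp only [if_neg h, this, hvn]
  · intro k hk1 hkm
    by_cases h : k < i
    · have h1 : k - 1 < i := by omega
      simp only [if_pos h, if_pos h1]
      exact hw k hk1 (by omega)
    · have hK1 : 1 ≤ k + (j - i) := by omega
      have hKn : k + (j - i) ≤ n := by omega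
      obtain ⟨he, hv1, hv2⟩ := hw (k + (j - i)) hK1 hKn
      simp only [if_neg h]
      by_cases h1 : k - 1 < i
      · have hki : k = i := by omega
        have hKj : k + (j - i) = j := by omega
        obtain ⟨hei, hvi1, _⟩ := hw i hi1 (by omega)
        rw [hKj, ← heij] at he hv1 hv2 ⊢
        refine ⟨hei, ?_, hv2⟩
        rw [if_pos h1, hki]
        exact hvi1
      · have : k - 1 + (j - i) = k + (j - i) - 1 := by omega
        simp only [if_neg h1, this]
        exact ⟨he, hv1, hv2⟩

end TF


set_option linter.unusedSectionVars false
namespace TF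
variable {α : Type*} [DecidableEq α]

lemma not_triReach_erase {E : Finset (Finset α)} (hforest : ¬ HasTriCycle E)
    {e : Finset α} (he : e ∈ E) {a b : α} (ha : a ∈ e) (hb : b ∈ e) (hab : a ≠ b) :
    ¬ TriReach (E.erase e) a b := by
  intro hr
  classical
  have hex : ∃ n, Walk (E.erase e) a b n := triReach_walk hr
  obtain ⟨n, hwn, hmin⟩ : ∃ n, Walk (E.erase e) a b n ∧ ∀ m < n, ¬ Walk (E.erase e) a b m :=
    ⟨Nat.find hex, Nat.find_spec hex, fun m hm => Nat.find_min hex hm⟩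
  obtain ⟨ew, vw, hv0, hvn, hw⟩ := hwn
  have hn1 : 1 ≤ n := by
    rcases Nat.eq_zero_or_pos n with h | h
    · subst h; exact absurd (hv0 ▸ hvn) hab
    · exact h
  have hvd : ∀ i j, i < j → j ≤ n → vw i ≠ vw j := by
    intro i j hij hjn hvij
    exact hmin (n - (j - i)) (by omega) (shortcut_vertex hv0 hvn hw hij hjn hvij)
  have hed : ∀ i j, 1 ≤ i → i < j → j ≤ n → ew i ≠ ew j := by
    intro i j hi1 hij hjn heij
    exact hmin (n - (j - i)) (by omega) (shortcut_edge hv0 hvn hw hi1 hij hjn heij)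
  apply hforest
  refine ⟨n + 1, fun k => if k ≤ n then ew k else e, fun k => if k ≤ n then vw k else a,
    by omega, ?_, ?_, ?_, ?_, ?_, ?_, ?_⟩
  · intro i hi1 hin
    by_cases h : i ≤ n
    · simp only [if_pos h]
      exact Finset.mem_of_mem_erase (hw i hi1 h).1
    · simp only [if_neg h]
      exact he
  · intro i j hi1 hij hjn
    have hi : i ≤ n := by omega
    by_cases h : j ≤ n
    · simp only [if_pos hi, if_pos h]
      exact hed i j hi1 hij h
    · simp only [if_pos hi, if_neg h]
      exact Finset.ne_of_mem_erase (hw i hi1 hi).1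
  · intro i j hij hjn
    have hi : i ≤ n := by omega
    have hj : j ≤ n := by omega
    simp only [if_pos hi, if_pos hj]
    exact hvd i j hij hj
  · simp only [if_neg (show ¬ n + 1 ≤ n by omega), if_pos (Nat.zero_le n), hv0]
  · simp only [if_pos (Nat.zero_le n), if_pos hn1]
    have := (hw 1 le_rfl hn1).2.1
    simpa using this
  · simp only [if_neg (show ¬ n + 1 ≤ n by omega)]
    exact ha
  · intro i hi0 hin
    have hi : i ≤ n := by omega
    simp only [if_pos hi]
    refine ⟨(hw i hi0 hi).2.2, ?_⟩
    by_cases h : i + 1 ≤ n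
    · simp only [if_pos h]
      have := (hw (i + 1) (by omega) h).2.1
      simpa using this
    · have hieq : i = n := by omega
      simp only [if_neg h]
      subst hieq
      exact hvn ▸ hb
end TF


set_option linter.unusedSectionVars false
namespace TF
variable {α : Type*} [DecidableEq α]

lemma triReach_erase_decomp {E : Finset (Finset α)} {e : Finset α}
    {x y : α} (h : TriReach E x y) :
    TriReach (E.erase e) x y ∨
      ∃ p ∈ e, ∃ q ∈ e, TriReach (E.erase e) x p ∧ TriReach (E.erase e) q y := by
  induction h with
  | refl => exact Or.inl .refl
  | @tail b c _ hbc ih =>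
    obtain ⟨f, hf, hbf, hcf⟩ := hbc
    rcases ih with ih | ⟨p, hp, q, hq, hxp, hqb⟩
    · by_cases hfe : f = e
      · subst hfe
        exact Or.inr ⟨b, hbf, c, hcf, ih, .refl⟩
      · exact Or.inl (ih.tail ⟨f, Finset.mem_erase.2 ⟨hfe, hf⟩, hbf, hcf⟩)
    · by_cases hfe : f = e
      · subst hfe
        exact Or.inr ⟨p, hp, c, hcf, hxp, .refl⟩
      · exact Or.inr ⟨p, hp, q, hq, hxp, hqb.tail ⟨f, Finset.mem_erase.2 ⟨hfe, hf⟩, hbf, hcf⟩⟩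

lemma triReach_empty {x y : α} (h : TriReach (∅ : Finset (Finset α)) x y) : x = y := by
  induction h with
  | refl => rfl
  | tail _ hbc ih => obtain ⟨f, hf, _⟩ := hbc; simp at hf

/-- The connected component of `x` as a finset. -/
noncomputable def compf (V : Finset α) (E : Finset (Finset α)) (x : α) : Finset α :=
  @Finset.filter _ (fun y => TriReach E x y) (Classical.decPred _) V

/-- The edges in the component of `x`. -/
noncomputable def Dfin (E : Finset (Finset α)) (x : α) : Finset (Finset α) :=
  @Finset.filter _ (fun f => ∀ z ∈ f, TriReach E x z) (Classical.decPred _) E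

lemma mem_compf {V : Finset α} {E : Finset (Finset α)} {x y : α} :
    y ∈ compf V E x ↔ y ∈ V ∧ TriReach E x y := by
  simp [compf, Finset.mem_filter]

lemma mem_Dfin {E : Finset (Finset α)} {x : α} {f : Finset α} :
    f ∈ Dfin E x ↔ f ∈ E ∧ ∀ z ∈ f, TriReach E x z := by
  simp [Dfin, Finset.mem_filter]
end TF


set_option linter.unusedSectionVars false
set_option maxHeartbeats 1000000
namespace TF
variable {α : Type*} [DecidableEq α]

lemma comp_card (V : Finset α) (E : Finset (Finset α)) (hgraph : IsTriangleGraph V E)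
    (hforest : ¬ HasTriCycle E) : ∀ x ∈ V, (compf V E x).card = 2 * (Dfin E x).card + 1 := by
  induction E using Finset.strongInduction with
  | _ E ih =>
  intro x hx
  rcases Finset.eq_empty_or_nonempty E with rfl | ⟨e, he⟩
  · have hc : compf V ∅ x = {x} := by
      ext y
      simp only [mem_compf, Finset.mem_singleton]
      constructor
      · rintro ⟨-, h⟩; exact (triReach_empty h).symm
      · rintro rfl; exact ⟨hx, .refl⟩
    have hd : Dfin (∅ : Finset (Finset α)) x = ∅ := by
      ext f; simp [mem_Dfin]
    rw [hc, hd]; simp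
  · set E' := E.erase e with hE'
    have hsub : E' ⊆ E := Finset.erase_subset _ _
    have hss : E' ⊂ E := Finset.erase_ssubset he
    have hgraph' : IsTriangleGraph V E' := fun f hf => hgraph f (hsub hf)
    have hforest' : ¬ HasTriCycle E' := fun h => hforest (hasTriCycle_mono hsub h)
    obtain ⟨hcard3, heV⟩ := hgraph e he
    obtain ⟨a, b, c, hab, hac, hbc, heabc⟩ := Finset.card_eq_three.1 hcard3
    have hae : a ∈ e := by rw [heabc]; simp
    have hbe : b ∈ e := by rw [heabc]; simp
    have hce : c ∈ e := by rw [heabc]; simp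
    have haV : a ∈ V := heV hae
    have hbV : b ∈ V := heV hbe
    have hcV : c ∈ V := heV hce
    have hnab : ¬ TriReach E' a b := not_triReach_erase hforest he hae hbe hab
    have hnac : ¬ TriReach E' a c := not_triReach_erase hforest he hae hce hac
    have hnbc : ¬ TriReach E' b c := not_triReach_erase hforest he hbe hce hbc
    -- any two vertices of e are joined in E
    have hstepe : ∀ p ∈ e, ∀ q ∈ e, TriStep E p q := fun p hp q hq => ⟨e, he, hp, hq⟩
    -- distinct E'-reach from two vertices of e is impossible
    have hnpq : ∀ p ∈ e, ∀ q ∈ e, p ≠ q → ¬ TriReach E' p q := by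
      intro p hp q hq hpq
      exact not_triReach_erase hforest he hp hq hpq
    by_cases hxa : TriReach E x a
    · -- x is in the component of e
      have hxp : ∀ p ∈ e, TriReach E x p := fun p hp =>
        hxa.tail ⟨e, he, hae, hp⟩
      have hreach : ∀ y, TriReach E x y ↔
          (TriReach E' a y ∨ TriReach E' b y ∨ TriReach E' c y) := by
        intro y
        constructor
        · intro h
          have hay : TriReach E a y := (triReach_symm hxa).trans h
          rcases triReach_erase_decomp (e := e) hay with h' | ⟨p, hp, q, hq, _, hqy⟩
          · exact Or.inl h'
          · rw [heabc] at hq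
            simp only [Finset.mem_insert, Finset.mem_singleton] at hq
            rcases hq with rfl | rfl | rfl
            · exact Or.inl hqy
            · exact Or.inr (Or.inl hqy)
            · exact Or.inr (Or.inr hqy)
        · intro h
          rcases h with h | h | h
          · exact (hxp a hae).trans (triReach_mono hsub h)
          · exact (hxp b hbe).trans (triReach_mono hsub h)
          · exact (hxp c hce).trans (triReach_mono hsub h)
      have hcomp : compf V E x = compf V E' a ∪ compf V E' b ∪ compf V E' c := by
        ext y
        simp only [mem_compf, Finset.mem_union, hreach y]
        tauto
      have hdisj : ∀ p ∈ e, ∀ q ∈ e, p ≠ q → Disjoint (compf V E' p) (compf V E' q) := by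
        intro p hp q hq hpq
        rw [Finset.disjoint_left]
        intro y hyp hyq
        rw [mem_compf] at hyp hyq
        exact hnpq p hp q hq hpq ((hyp.2).trans (triReach_symm hyq.2))
      have hccard : (compf V E x).card =
          (compf V E' a).card + (compf V E' b).card + (compf V E' c).card := by
        rw [hcomp, Finset.card_union_of_disjoint, Finset.card_union_of_disjoint]
        · exact hdisj a hae b hbe hab
        · rw [Finset.disjoint_union_left]
          exact ⟨hdisj a hae c hce hac, hdisj b hbe c hce hbc⟩
      -- the edge sets
      have hD : Dfin E x = insert e (Dfin E' a ∪ Dfin E' b ∪ Dfin E' c) := by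
        ext f
        simp only [mem_Dfin, Finset.mem_insert, Finset.mem_union]
        constructor
        · rintro ⟨hfE, hall⟩
          by_cases hfe : f = e
          · exact Or.inl hfe
          · right
            have hfE' : f ∈ E' := Finset.mem_erase.2 ⟨hfe, hfE⟩
            have hfne : f.Nonempty := Finset.card_pos.1 (by rw [(hgraph f hfE).1]; omega)
            obtain ⟨z₀, hz₀⟩ := hfne
            have haz₀ : TriReach E a z₀ := (triReach_symm hxa).trans (hall z₀ hz₀)
            have hup : ∀ q ∈ e, TriReach E' q z₀ → ∀ z ∈ f, TriReach E' q z := by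
              intro q hq h z hz
              exact h.tail ⟨f, hfE', hz₀, hz⟩
            rcases triReach_erase_decomp (e := e) haz₀ with h' | ⟨p, hp, q, hq, _, hqz⟩
            · exact Or.inl (Or.inl ⟨hfE', hup a hae h'⟩)
            · rw [heabc] at hq
              simp only [Finset.mem_insert, Finset.mem_singleton] at hq
              rcases hq with rfl | rfl | rfl
              · exact Or.inl (Or.inl ⟨hfE', hup q hae hqz⟩)
              · exact Or.inl (Or.inr ⟨hfE', hup q hbe hqz⟩)
              · exact Or.inr ⟨hfE', hup q hce hqz⟩
        · rintro (rfl | (⟨hf, hall⟩ | ⟨hf, hall⟩) | ⟨hf, hall⟩)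
          · exact ⟨he, fun z hz => hxp z hz⟩
          · exact ⟨hsub hf, fun z hz => (hxp a hae).trans (triReach_mono hsub (hall z hz))⟩
          · exact ⟨hsub hf, fun z hz => (hxp b hbe).trans (triReach_mono hsub (hall z hz))⟩
          · exact ⟨hsub hf, fun z hz => (hxp c hce).trans (triReach_mono hsub (hall z hz))⟩
      have hDdisj : ∀ p ∈ e, ∀ q ∈ e, p ≠ q → Disjoint (Dfin E' p) (Dfin E' q) := by
        intro p hp q hq hpq
        rw [Finset.disjoint_left]
        intro f hfp hfq
        rw [mem_Dfin] at hfp hfq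
        have hfne : f.Nonempty := Finset.card_pos.1 (by rw [(hgraph f (hsub hfp.1)).1]; omega)
        obtain ⟨z₀, hz₀⟩ := hfne
        exact hnpq p hp q hq hpq ((hfp.2 z₀ hz₀).trans (triReach_symm (hfq.2 z₀ hz₀)))
      have henotin : e ∉ Dfin E' a ∪ Dfin E' b ∪ Dfin E' c := by
        simp only [Finset.mem_union, mem_Dfin]
        rintro ((⟨h, -⟩ | ⟨h, -⟩) | ⟨h, -⟩) <;> exact (Finset.notMem_erase e E) h
      have hDcard : (Dfin E x).card =
          (Dfin E' a).card + (Dfin E' b).card + (Dfin E' c).card + 1 := by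
        rw [hD, Finset.card_insert_of_notMem henotin, Finset.card_union_of_disjoint,
          Finset.card_union_of_disjoint]
        · exact hDdisj a hae b hbe hab
        · rw [Finset.disjoint_union_left]
          exact ⟨hDdisj a hae c hce hac, hDdisj b hbe c hce hbc⟩
      have iha := ih E' hss hgraph' hforest' a haV
      have ihb := ih E' hss hgraph' hforest' b hbV
      have ihc := ih E' hss hgraph' hforest' c hcV
      rw [hccard, hDcard, iha, ihb, ihc]
      ring
    · -- x is not in the component of e
      have hiff : ∀ y, TriReach E x y ↔ TriReach E' x y := by
        intro y
        constructor
        · intro h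
          rcases triReach_erase_decomp (e := e) h with h' | ⟨p, hp, q, hq, hxp, _⟩
          · exact h'
          · exact absurd ((triReach_mono hsub hxp).tail ⟨e, he, hp, hae⟩) hxa
        · exact triReach_mono hsub
      have hcomp : compf V E x = compf V E' x := by
        ext y; simp only [mem_compf, hiff y]
      have hD : Dfin E x = Dfin E' x := by
        ext f
        simp only [mem_Dfin]
        constructor
        · rintro ⟨hfE, hall⟩
          have hfe : f ≠ e := by
            rintro rfl
            exact hxa (hall a hae)
          exact ⟨Finset.mem_erase.2 ⟨hfe, hfE⟩, fun z hz => (hiff z).1 (hall z hz)⟩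
        · rintro ⟨hfE', hall⟩
          exact ⟨hsub hfE', fun z hz => (hiff z).2 (hall z hz)⟩
      rw [hcomp, hD]
      exact ih E' hss hgraph' hforest' x hx
end TF


set_option linter.unusedSectionVars false
set_option maxHeartbeats 1000000
namespace TF
variable {α : Type*} [DecidableEq α]

lemma compf_eq_iff {V : Finset α} {E : Finset (Finset α)} {x y : α} (hx : x ∈ V) (hy : y ∈ V) :
    compf V E x = compf V E y ↔ TriReach E x y := by
  constructor
  · intro h
    have : y ∈ compf V E y := mem_compf.2 ⟨hy, .refl⟩
    rw [← h] at this
    exact (mem_compf.1 this).2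
  · intro h
    ext z
    simp only [mem_compf]
    exact and_congr_right fun _ =>
      ⟨fun h' => (triReach_symm h).trans h', fun h' => h.trans h'⟩

theorem main {α : Type*} [DecidableEq α]
    (V : Finset α) (E : Finset (Finset α))
    (hgraph : IsTriangleGraph V E) (hforest : ¬ HasTriCycle E) :
    Nat.card {C : Set α // ∃ x ∈ V, C = {y | y ∈ V ∧ TriReach E x y}} =
      V.card - 2 * E.card ∧
    2 * E.card ≤ V.card ∧
    ∀ x ∈ V,
      ({y | y ∈ V ∧ TriReach E x y} : Set α).ncard =
        2 * ({e : Finset α | e ∈ E ∧ ∀ z ∈ e, TriReach E x z} : Set (Finset α)).ncard + 1 := by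
  classical
  have hsetC : ∀ x, ({y | y ∈ V ∧ TriReach E x y} : Set α) = ↑(compf V E x) := by
    intro x; ext y; simp [mem_compf]
  have hsetD : ∀ x, ({e : Finset α | e ∈ E ∧ ∀ z ∈ e, TriReach E x z} : Set (Finset α))
      = ↑(Dfin E x) := by
    intro x; ext f; simp [mem_Dfin]
  have part3 : ∀ x ∈ V,
      ({y | y ∈ V ∧ TriReach E x y} : Set α).ncard =
        2 * ({e : Finset α | e ∈ E ∧ ∀ z ∈ e, TriReach E x z} : Set (Finset α)).ncard + 1 := by
    intro x hx
    rw [hsetC, hsetD, Set.ncard_coe_finset, Set.ncard_coe_finset]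
    exact comp_card V E hgraph hforest x hx
  -- the number of components
  set count := (V.image (compf V E)).card with hcount
  -- Nat.card of the component subtype equals count
  have partA : Nat.card {C : Set α // ∃ x ∈ V, C = {y | y ∈ V ∧ TriReach E x y}} = count := by
    have hSeq : {C : Set α | ∃ x ∈ V, C = {y | y ∈ V ∧ TriReach E x y}} =
        ↑((V.image (compf V E)).image ((↑·) : Finset α → Set α)) := by
      ext C
      simp only [Set.mem_setOf_eq, Finset.coe_image, Set.mem_image, Finset.mem_coe,
        Finset.mem_image]
      constructor
      · rintro ⟨x, hx, rfl⟩
        exact ⟨compf V E x, ⟨x, hx, rfl⟩, (hsetC x).symm⟩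
      · rintro ⟨F, ⟨x, hx, rfl⟩, rfl⟩
        exact ⟨x, hx, (hsetC x).symm⟩
    have h1 : Nat.card {C : Set α // ∃ x ∈ V, C = {y | y ∈ V ∧ TriReach E x y}} =
        Set.ncard {C : Set α | ∃ x ∈ V, C = {y | y ∈ V ∧ TriReach E x y}} :=
      Nat.card_coe_set_eq _
    rw [h1, hSeq, Set.ncard_coe_finset,
      Finset.card_image_of_injective _ Finset.coe_injective]
  -- fiberwise counting
  set g : Finset α → Finset α := fun f => if h : f.Nonempty then compf V E h.choose else ∅
    with hg
  have hmap : ∀ f ∈ E, g f ∈ V.image (compf V E) := by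
    intro f hf
    have hne : f.Nonempty := Finset.card_pos.1 (by rw [(hgraph f hf).1]; omega)
    rw [hg]; simp only [dif_pos hne]
    exact Finset.mem_image_of_mem _ ((hgraph f hf).2 hne.choose_spec)
  have key : ∀ F ∈ V.image (compf V E),
      (V.filter (fun y => compf V E y = F)).card =
        2 * (E.filter (fun f => g f = F)).card + 1 := by
    intro F hF
    obtain ⟨x, hx, rfl⟩ := Finset.mem_image.1 hF
    have hVf : V.filter (fun y => compf V E y = compf V E x) = compf V E x := by
      ext y
      simp only [Finset.mem_filter, mem_compf]
      exact and_congr_right fun hy =>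
        (compf_eq_iff hy hx).trans ⟨triReach_symm, triReach_symm⟩
    have hEf : E.filter (fun f => g f = compf V E x) = Dfin E x := by
      ext f
      simp only [Finset.mem_filter, mem_Dfin]
      refine and_congr_right fun hf => ?_
      have hne : f.Nonempty := Finset.card_pos.1 (by rw [(hgraph f hf).1]; omega)
      have hz₀f : hne.choose ∈ f := hne.choose_spec
      have hz₀V : hne.choose ∈ V := (hgraph f hf).2 hz₀f
      rw [hg]; simp only [dif_pos hne]
      rw [compf_eq_iff hz₀V hx]
      constructor
      · intro h z hz
        exact (triReach_symm h).tail ⟨f, hf, hz₀f, hz⟩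
      · intro h
        exact triReach_symm (h _ hz₀f)
    rw [hVf, hEf]
    exact comp_card V E hgraph hforest x hx
  have h1 : V.card = ∑ F ∈ V.image (compf V E), (V.filter (fun y => compf V E y = F)).card :=
    Finset.card_eq_sum_card_fiberwise (fun x hx => Finset.mem_image_of_mem _ hx)
  have h2 : E.card = ∑ F ∈ V.image (compf V E), (E.filter (fun f => g f = F)).card :=
    Finset.card_eq_sum_card_fiberwise hmap
  have h3 : V.card = 2 * E.card + count := by
    rw [h1, Finset.sum_congr rfl key, Finset.sum_add_distrib, Finset.sum_const,
      ← Finset.mul_sum, ← h2, smul_eq_mul, mul_one]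
  exact ⟨by omega, by omega, part3⟩
end TF

/-- Every connected component of a triangle forest has an odd number of vertices.
More precisely, a triangle forest with `n` vertices and `d` triangles has exactly
`n - 2d` connected components, and each component with `dᵢ` triangles has `2dᵢ + 1`
vertices. -/
theorem triangle_forest_components {α : Type*} [DecidableEq α]
    (V : Finset α) (E : Finset (Finset α))
    (hgraph : IsTriangleGraph V E) (hforest : ¬ HasTriCycle E) :
    Nat.card {C : Set α // ∃ x ∈ V, C = {y | y ∈ V ∧ TriReach E x y}} =
      V.card - 2 * E.card ∧
    2 * E.card ≤ V.card ∧
    ∀ x ∈ V,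
      ({y | y ∈ V ∧ TriReach E x y} : Set α).ncard =
        2 * ({e : Finset α | e ∈ E ∧ ∀ z ∈ e, TriReach E x z} : Set (Finset α)).ncard + 1 := by
  exact TF.main V E hgraph hforest
end

section
/- Let Λ̃(S) be the supercommutative ℤ-algebra with degree-1 generators τ_{ijk} (symmetric in i,j,k) for distinct i,j,k ∈ S, subject to τ_{ijk}τ_{jkl} = 0 and τ_{ijk}τ_{klm} + τ_{jkl}τ_{lmi} + τ_{klm}τ_{mij} + τ_{lmi}τ_{ijk} + τ_{mij}τ_{jkl} = 0. Then for any two distinct elements j, j' ∈ S, the component Λ̃[S] (monomials whose triangle graph is connected on S) is spanned by monomials in which at least one generator τ contains both j and j'. -/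
variable {S : Type*} [DecidableEq S]

/-- 3-element subsets of `S`, indexing the symmetric generators `τ_{ijk}`. -/
def Tri (S : Type*) [DecidableEq S] : Type _ := {s : Finset S // s.card = 3}

/-- The relations of `Λ̃(S)`: `τ_{ijk}τ_{jkl} = 0` and the 5-term cyclic quadratic
relation.  (The ambient exterior algebra on the free module with basis the 3-subsets
already makes the generators odd, skew-commuting, symmetric in `i,j,k`.) -/
noncomputable def tauE (i j k : S) : ExteriorAlgebra ℤ (Tri S →₀ ℤ) :=
  if h : ({i, j, k} : Finset S).card = 3 then
    ExteriorAlgebra.ι ℤ (Finsupp.single (⟨{i, j, k}, h⟩ : Tri S) 1) else 0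

/-- The defining relations of `Λ̃(S)`. -/
inductive TRel : ExteriorAlgebra ℤ (Tri S →₀ ℤ) → ExteriorAlgebra ℤ (Tri S →₀ ℤ) → Prop
  | short (i j k l : S) (h : ({i, j, k, l} : Finset S).card = 4) :
      TRel (tauE i j k * tauE j k l) 0
  | five (i j k l p : S) (h : ({i, j, k, l, p} : Finset S).card = 5) :
      TRel (tauE i j k * tauE k l p + tauE j k l * tauE l p i + tauE k l p * tauE p i j +
        tauE l p i * tauE i j k + tauE p i j * tauE j k l) 0

/-- The algebra `Λ̃(S)`. -/
noncomputable def TildeLambda (S : Type*) [DecidableEq S] := RingQuot (TRel (S := S))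

noncomputable instance : Ring (TildeLambda S) := by unfold TildeLambda; infer_instance
noncomputable instance : Algebra ℤ (TildeLambda S) := by unfold TildeLambda; infer_instance

/-- The monomial of `Λ̃(S)` associated to a list of 3-subsets (its triangle graph). -/
noncomputable def monoT (L : List (Tri S)) : TildeLambda S :=
  (L.map fun s => RingQuot.mkAlgHom ℤ (TRel (S := S))
    (ExteriorAlgebra.ι ℤ (Finsupp.single s 1))).prod

/-- Two vertices lie on a common triangle of the monomial `L`. -/
def stepT (L : List (Tri S)) (x y : S) : Prop := ∃ s ∈ L, x ∈ s.1 ∧ y ∈ s.1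

/-- Reachability in the triangle graph of the monomial `L`. -/
def reachT (L : List (Tri S)) : S → S → Prop := Relation.ReflTransGen (stepT L)

/-! ### Auxiliary material -/

instance : DecidableEq (Tri S) := by unfold Tri; infer_instance

/-- The generator of `TildeLambda` associated to a 3-subset. -/
noncomputable def gT (s : Tri S) : TildeLambda S :=
  RingQuot.mkAlgHom ℤ (TRel (S := S)) (ExteriorAlgebra.ι ℤ (Finsupp.single s 1))

lemma monoT_cons (a : Tri S) (L : List (Tri S)) : monoT (a :: L) = gT a * monoT L := by
  simp [monoT, gT]; rfl

lemma mk_tauE_eq_gT {i j k : S} (h : ({i, j, k} : Finset S).card = 3) :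
    RingQuot.mkAlgHom ℤ (TRel (S := S)) (tauE i j k) = gT (⟨{i, j, k}, h⟩ : Tri S) := by
  unfold tauE; rw [dif_pos h]; rfl

lemma gT_anticomm (a b : Tri S) : gT a * gT b = -(gT b * gT a) := by
  have h0 := ExteriorAlgebra.ι_add_mul_swap (R := ℤ)
    (Finsupp.single a (1 : ℤ)) (Finsupp.single b 1)
  have h1 := congrArg (RingQuot.mkAlgHom ℤ (TRel (S := S))) h0
  rw [map_add, map_mul, map_mul, map_zero] at h1
  exact eq_neg_of_add_eq_zero_left h1

lemma card3 {a b c : S} (hab : a ≠ b) (hac : a ≠ c) (hbc : b ≠ c) :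
    ({a, b, c} : Finset S).card = 3 := by
  rw [Finset.card_insert_of_notMem (by simp [hab, hac]),
    Finset.card_insert_of_notMem (by simp [hbc]), Finset.card_singleton]

lemma card4 {a b c d : S} (hab : a ≠ b) (hac : a ≠ c) (had : a ≠ d) (hbc : b ≠ c)
    (hbd : b ≠ d) (hcd : c ≠ d) : ({a, b, c, d} : Finset S).card = 4 := by
  rw [Finset.card_insert_of_notMem (by simp [hab, hac, had]), card3 hbc hbd hcd]

lemma card5 {a b c d e : S} (hab : a ≠ b) (hac : a ≠ c) (had : a ≠ d) (hae : a ≠ e)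
    (hbc : b ≠ c) (hbd : b ≠ d) (hbe : b ≠ e) (hcd : c ≠ d) (hce : c ≠ e) (hde : d ≠ e) :
    ({a, b, c, d, e} : Finset S).card = 5 := by
  rw [Finset.card_insert_of_notMem (by simp [hab, hac, had, hae]),
    card4 hbc hbd hbe hcd hce hde]

/-- The short relation in the quotient. -/
lemma gT_mul_eq_zero {s t : Tri S} (hst : s ≠ t) (h2 : 2 ≤ (s.1 ∩ t.1).card) :
    gT s * gT t = 0 := by
  obtain ⟨a, ha, b, hb, hab⟩ := Finset.one_lt_card.mp h2
  have has : a ∈ s.1 := (Finset.mem_inter.mp ha).1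
  have hat : a ∈ t.1 := (Finset.mem_inter.mp ha).2
  have hbs : b ∈ s.1 := (Finset.mem_inter.mp hb).1
  have hbt : b ∈ t.1 := (Finset.mem_inter.mp hb).2
  -- find the third element of s
  have hsub : ({a, b} : Finset S) ⊆ s.1 := by
    intro x hx; rcases Finset.mem_insert.mp hx with rfl | hx
    · exact has
    · rw [Finset.mem_singleton.mp hx]; exact hbs
  have hcard2 : ({a, b} : Finset S).card = 2 := Finset.card_pair hab
  have hne : (s.1 \ ({a, b} : Finset S)).Nonempty := by
    rw [← Finset.card_pos, Finset.card_sdiff_of_subset hsub, s.2, hcard2]; norm_num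
  obtain ⟨c, hc⟩ := hne
  have hcs : c ∈ s.1 := (Finset.mem_sdiff.mp hc).1
  have hcab : c ∉ ({a, b} : Finset S) := (Finset.mem_sdiff.mp hc).2
  have hca : c ≠ a := fun h => hcab (by simp [h])
  have hcb : c ≠ b := fun h => hcab (by simp [h])
  have hseq : s.1 = {c, a, b} := by
    refine (Finset.eq_of_subset_of_card_le ?_ ?_).symm
    · intro x hx
      rcases Finset.mem_insert.mp hx with rfl | hx
      · exact hcs
      rcases Finset.mem_insert.mp hx with rfl | hx
      · exact has
      · rw [Finset.mem_singleton.mp hx]; exact hbs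
    · rw [s.2, card3 hca hcb hab]
  -- third element of t
  have hsub' : ({a, b} : Finset S) ⊆ t.1 := by
    intro x hx; rcases Finset.mem_insert.mp hx with rfl | hx
    · exact hat
    · rw [Finset.mem_singleton.mp hx]; exact hbt
  have hne' : (t.1 \ ({a, b} : Finset S)).Nonempty := by
    rw [← Finset.card_pos, Finset.card_sdiff_of_subset hsub', t.2, hcard2]; norm_num
  obtain ⟨d, hd⟩ := hne'
  have hdt : d ∈ t.1 := (Finset.mem_sdiff.mp hd).1
  have hdab : d ∉ ({a, b} : Finset S) := (Finset.mem_sdiff.mp hd).2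
  have hda : d ≠ a := fun h => hdab (by simp [h])
  have hdb : d ≠ b := fun h => hdab (by simp [h])
  have hteq : t.1 = {a, b, d} := by
    refine (Finset.eq_of_subset_of_card_le ?_ ?_).symm
    · intro x hx
      rcases Finset.mem_insert.mp hx with rfl | hx
      · exact hat
      rcases Finset.mem_insert.mp hx with rfl | hx
      · exact hbt
      · rw [Finset.mem_singleton.mp hx]; exact hdt
    · rw [t.2, card3 hab (Ne.symm hda) (Ne.symm hdb)]
  have hcd : c ≠ d := by
    rintro rfl
    exact hst (Subtype.ext (by rw [hseq, hteq]; ext x; simp; tauto))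
  have h3s : ({c, a, b} : Finset S).card = 3 := card3 hca hcb hab
  have h3t : ({a, b, d} : Finset S).card = 3 := card3 hab (Ne.symm hda) (Ne.symm hdb)
  have hrel := RingQuot.mkAlgHom_rel ℤ (TRel.short c a b d
    (card4 hca hcb hcd hab (Ne.symm hda) (Ne.symm hdb)))
  rw [map_mul, map_zero, mk_tauE_eq_gT h3s, mk_tauE_eq_gT h3t] at hrel
  have es : (⟨{c, a, b}, h3s⟩ : Tri S) = s := Subtype.ext hseq.symm
  have et : (⟨{a, b, d}, h3t⟩ : Tri S) = t := Subtype.ext hteq.symm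
  rw [es, et] at hrel
  exact hrel

/-- The five-term relation in the quotient. -/
lemma gT_five (i j k l p : S) (h5 : ({i, j, k, l, p} : Finset S).card = 5)
    (h1 : ({i, j, k} : Finset S).card = 3) (h2 : ({k, l, p} : Finset S).card = 3)
    (h3 : ({j, k, l} : Finset S).card = 3) (h4 : ({l, p, i} : Finset S).card = 3)
    (h6 : ({p, i, j} : Finset S).card = 3) :
    gT (⟨{i, j, k}, h1⟩ : Tri S) * gT ⟨{k, l, p}, h2⟩ =
      -(gT (⟨{j, k, l}, h3⟩ : Tri S) * gT ⟨{l, p, i}, h4⟩ +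
        gT (⟨{k, l, p}, h2⟩ : Tri S) * gT ⟨{p, i, j}, h6⟩ +
        gT (⟨{l, p, i}, h4⟩ : Tri S) * gT ⟨{i, j, k}, h1⟩ +
        gT (⟨{p, i, j}, h6⟩ : Tri S) * gT ⟨{j, k, l}, h3⟩) := by
  have hrel := RingQuot.mkAlgHom_rel ℤ (TRel.five i j k l p h5)
  simp only [map_add, map_mul, map_zero] at hrel
  rw [mk_tauE_eq_gT h1, mk_tauE_eq_gT h2, mk_tauE_eq_gT h3, mk_tauE_eq_gT h4,
    mk_tauE_eq_gT h6] at hrel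
  rw [eq_neg_iff_add_eq_zero]
  refine Eq.trans ?_ hrel
  abel

/-- Pulling an element of the list to the front changes the monomial by at most a sign. -/
lemma monoT_extract : ∀ (L : List (Tri S)) (a : Tri S), a ∈ L →
    monoT L = monoT (a :: L.erase a) ∨ monoT L = -monoT (a :: L.erase a) := by
  intro L
  induction L with
  | nil => intro a ha; simp at ha
  | cons b t ih =>
    intro a ha
    by_cases hab : a = b
    · subst hab
      rw [List.erase_cons_head]
      exact Or.inl rfl
    · have hat : a ∈ t := by
        rcases List.mem_cons.mp ha with h | h
        · exact absurd h hab
        · exact h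
      rw [List.erase_cons_tail (by simpa using Ne.symm hab)]
      have key : ∀ m : TildeLambda S, gT b * (gT a * m) = -(gT a * (gT b * m)) := by
        intro m
        rw [← mul_assoc, ← mul_assoc, gT_anticomm b a, neg_mul]
      rcases ih a hat with h | h
      · right
        rw [monoT_cons, h, monoT_cons, monoT_cons, monoT_cons, key]
      · left
        rw [monoT_cons, h, monoT_cons, monoT_cons, monoT_cons, mul_neg, key, neg_neg]

lemma monoT_extract2 (L : List (Tri S)) (s1 s2 : Tri S) (h1 : s1 ∈ L) (h2 : s2 ∈ L)
    (hne : s1 ≠ s2) :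
    monoT L = monoT (s1 :: s2 :: (L.erase s1).erase s2) ∨
      monoT L = -monoT (s1 :: s2 :: (L.erase s1).erase s2) := by
  have h2' : s2 ∈ L.erase s1 := (List.mem_erase_of_ne (Ne.symm hne)).mpr h2
  rcases monoT_extract L s1 h1 with h | h <;>
    rcases monoT_extract (L.erase s1) s2 h2' with h' | h'
  · left; rw [h, monoT_cons, h', ← monoT_cons]
  · right; rw [h, monoT_cons, h', mul_neg, ← monoT_cons]
  · right; rw [h, monoT_cons, h', ← monoT_cons]
  · left; rw [h, monoT_cons, h', mul_neg, ← monoT_cons, neg_neg]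

/-- Chains of given length in the triangle graph. -/
inductive ChainT (L : List (Tri S)) : S → S → ℕ → Prop
  | refl (x : S) : ChainT L x x 0
  | cons {x z : S} {n : ℕ} (s : Tri S) (y : S) (hs : s ∈ L) (hx : x ∈ s.1) (hy : y ∈ s.1)
      (h : ChainT L y z n) : ChainT L x z (n + 1)

lemma chainT_of_reach {L : List (Tri S)} {x y : S} (h : reachT L x y) :
    ∃ n, ChainT L x y n := by
  induction h using Relation.ReflTransGen.head_induction_on with
  | refl => exact ⟨0, ChainT.refl y⟩
  | head hstep _ ih =>
    obtain ⟨n, hc⟩ := ih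
    obtain ⟨s, hs, hx, hz⟩ := hstep
    exact ⟨n + 1, ChainT.cons s _ hs hx hz hc⟩

lemma chainT_mono {L1 L2 : List (Tri S)} (h : ∀ s ∈ L1, s ∈ L2) {x y : S} {n : ℕ}
    (hc : ChainT L1 x y n) : ChainT L2 x y n := by
  induction hc with
  | refl x => exact ChainT.refl x
  | cons s y hs hx hy _ ih => exact ChainT.cons s y (h s hs) hx hy ih

lemma chainT_avoid {L : List (Tri S)} (s1 s2 : Tri S) {y z : S} {m : ℕ}
    (h : ChainT L y z m) :
    ChainT ((L.erase s1).erase s2) y z m ∨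
      ∃ u k, k < m ∧ (u ∈ s1.1 ∨ u ∈ s2.1) ∧ ChainT L u z k := by
  induction h with
  | refl x => exact Or.inl (ChainT.refl x)
  | @cons x z n s w hs hx hw hch ih =>
    by_cases hss1 : s = s1
    · exact Or.inr ⟨w, n, Nat.lt_succ_self n, Or.inl (hss1 ▸ hw), hch⟩
    by_cases hss2 : s = s2
    · exact Or.inr ⟨w, n, Nat.lt_succ_self n, Or.inr (hss2 ▸ hw), hch⟩
    rcases ih with hL | ⟨u, k, hk, hu, hc⟩
    · refine Or.inl (ChainT.cons s w ?_ hx hw hL)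
      exact (List.mem_erase_of_ne hss2).mpr ((List.mem_erase_of_ne hss1).mpr hs)
    · exact Or.inr ⟨u, k, Nat.lt_succ_of_lt hk, hu, hc⟩

lemma reach_pair {M : List (Tri S)} {t1 t2 : Tri S} (ht1 : t1 ∈ M) (ht2 : t2 ∈ M) {v : S}
    (hv1 : v ∈ t1.1) (hv2 : v ∈ t2.1) {x y : S} (hx : x ∈ t1.1 ∨ x ∈ t2.1)
    (hy : y ∈ t1.1 ∨ y ∈ t2.1) : reachT M x y := by
  have hxv : reachT M x v := by
    rcases hx with h | h
    · exact Relation.ReflTransGen.single ⟨t1, ht1, h, hv1⟩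
    · exact Relation.ReflTransGen.single ⟨t2, ht2, h, hv2⟩
  have hvy : reachT M v y := by
    rcases hy with h | h
    · exact Relation.ReflTransGen.single ⟨t1, ht1, hv1, h⟩
    · exact Relation.ReflTransGen.single ⟨t2, ht2, hv2, h⟩
  exact hxv.trans hvy

lemma reach_replace {L M : List (Tri S)} {s1 s2 : Tri S}
    (hother : ∀ s ∈ L, s ≠ s1 → s ≠ s2 → s ∈ M)
    (h5 : ∀ x y : S, (x ∈ s1.1 ∨ x ∈ s2.1) → (y ∈ s1.1 ∨ y ∈ s2.1) → reachT M x y)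
    (hcon : ∀ x y, reachT L x y) : ∀ x y, reachT M x y := by
  have hstep : ∀ a b, stepT L a b → reachT M a b := by
    rintro a b ⟨s, hs, ha, hb⟩
    by_cases h1 : s = s1
    · exact h5 a b (Or.inl (h1 ▸ ha)) (Or.inl (h1 ▸ hb))
    by_cases h2 : s = s2
    · exact h5 a b (Or.inr (h2 ▸ ha)) (Or.inr (h2 ▸ hb))
    · exact Relation.ReflTransGen.single ⟨s, hother s hs h1 h2, ha, hb⟩
  intro x y
  have h := hcon x y
  induction h with
  | refl => exact Relation.ReflTransGen.refl
  | tail _ hbc ih => exact ih.trans (hstep _ _ hbc)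

lemma mem_of_pm {M : Submodule ℤ (TildeLambda S)} {x y : TildeLambda S}
    (h : x = y ∨ x = -y) (hy : y ∈ M) : x ∈ M := by
  rcases h with rfl | rfl
  · exact hy
  · have h := M.smul_mem (-1 : ℤ) hy
    rwa [Algebra.smul_def, map_neg, map_one, neg_one_mul] at h

set_option maxHeartbeats 2000000 in
lemma main_aux (j j' : S) (hjj : j ≠ j') (n : ℕ) :
    ∀ L : List (Tri S), (∀ x y, reachT L x y) → ChainT L j j' n →
    monoT L ∈ Submodule.span ℤ {a : TildeLambda S | ∃ L : List (Tri S),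
        (∀ x y : S, reachT L x y) ∧ (∃ s ∈ L, j ∈ s.1 ∧ j' ∈ s.1) ∧ a = monoT L} := by
  induction n using Nat.strong_induction_on with
  | _ n IH =>
  intro L hcon hch
  cases hch with
  | refl => exact absurd rfl hjj
  | @cons _ _ m s1 x1 hs1 hj hx1 tail =>
  cases tail with
  | refl => exact Submodule.subset_span ⟨L, hcon, ⟨s1, hs1, hj, hx1⟩, rfl⟩
  | @cons _ _ k s2 x2 hs2 hx1' hx2 tail2 =>
  by_cases hjs2 : j ∈ s2.1
  · exact IH (k + 1) (by omega) L hcon (ChainT.cons s2 x2 hs2 hjs2 hx2 tail2)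
  by_cases hx2s1 : x2 ∈ s1.1
  · exact IH (k + 1) (by omega) L hcon (ChainT.cons s1 x2 hs1 hj hx2s1 tail2)
  have hs1ne : s1 ≠ s2 := fun h => hjs2 (h ▸ hj)
  set L'' := (L.erase s1).erase s2 with hL''
  obtain hpm := monoT_extract2 L s1 s2 hs1 hs2 hs1ne
  by_cases hcard : 2 ≤ (s1.1 ∩ s2.1).card
  · -- the two triangles share two vertices: the monomial is zero
    have hz : monoT (s1 :: s2 :: L'') = 0 := by
      rw [monoT_cons, monoT_cons, ← mul_assoc, gT_mul_eq_zero hs1ne hcard, zero_mul]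
    rw [hz] at hpm
    apply mem_of_pm hpm (zero_mem _)
  · -- the two triangles share exactly the vertex x1
    push_neg at hcard
    have hinter : s1.1 ∩ s2.1 = {x1} := by
      refine (Finset.eq_of_subset_of_card_le ?_ ?_).symm
      · intro x hx
        rw [Finset.mem_singleton.mp hx]
        exact Finset.mem_inter.mpr ⟨hx1, hx1'⟩
      · rw [Finset.card_singleton]; omega
    have hjx1 : j ≠ x1 := fun h => hjs2 (h ▸ hx1')
    have hx1x2 : x1 ≠ x2 := fun h => hx2s1 (h ▸ hx1)
    have hjx2 : j ≠ x2 := fun h => hjs2 (h ▸ hx2)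
    -- third vertex of s1
    have hsub1 : ({j, x1} : Finset S) ⊆ s1.1 := by
      intro x hx; rcases Finset.mem_insert.mp hx with rfl | hx
      · exact hj
      · rw [Finset.mem_singleton.mp hx]; exact hx1
    have hne1 : (s1.1 \ ({j, x1} : Finset S)).Nonempty := by
      rw [← Finset.card_pos, Finset.card_sdiff_of_subset hsub1, s1.2, Finset.card_pair hjx1]; norm_num
    obtain ⟨w1, hw1⟩ := hne1
    have hw1s1 : w1 ∈ s1.1 := (Finset.mem_sdiff.mp hw1).1
    have hw1j : w1 ≠ j := fun h => (Finset.mem_sdiff.mp hw1).2 (by simp [h])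
    have hw1x1 : w1 ≠ x1 := fun h => (Finset.mem_sdiff.mp hw1).2 (by simp [h])
    have hs1eq : s1.1 = {j, w1, x1} := by
      refine (Finset.eq_of_subset_of_card_le ?_ ?_).symm
      · intro x hx
        rcases Finset.mem_insert.mp hx with rfl | hx
        · exact hj
        rcases Finset.mem_insert.mp hx with rfl | hx
        · exact hw1s1
        · rw [Finset.mem_singleton.mp hx]; exact hx1
      · rw [s1.2, card3 (Ne.symm hw1j) hjx1 hw1x1]
    -- third vertex of s2
    have hsub2 : ({x1, x2} : Finset S) ⊆ s2.1 := by
      intro x hx; rcases Finset.mem_insert.mp hx with rfl | hx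
      · exact hx1'
      · rw [Finset.mem_singleton.mp hx]; exact hx2
    have hne2 : (s2.1 \ ({x1, x2} : Finset S)).Nonempty := by
      rw [← Finset.card_pos, Finset.card_sdiff_of_subset hsub2, s2.2, Finset.card_pair hx1x2]; norm_num
    obtain ⟨w2, hw2⟩ := hne2
    have hw2s2 : w2 ∈ s2.1 := (Finset.mem_sdiff.mp hw2).1
    have hw2x1 : w2 ≠ x1 := fun h => (Finset.mem_sdiff.mp hw2).2 (by simp [h])
    have hw2x2 : w2 ≠ x2 := fun h => (Finset.mem_sdiff.mp hw2).2 (by simp [h])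
    have hs2eq : s2.1 = {x1, w2, x2} := by
      refine (Finset.eq_of_subset_of_card_le ?_ ?_).symm
      · intro x hx
        rcases Finset.mem_insert.mp hx with rfl | hx
        · exact hx1'
        rcases Finset.mem_insert.mp hx with rfl | hx
        · exact hw2s2
        · rw [Finset.mem_singleton.mp hx]; exact hx2
      · rw [s2.2, card3 (Ne.symm hw2x1) hx1x2 hw2x2]
    have hw1s2 : w1 ∉ s2.1 := by
      intro h
      have : w1 ∈ s1.1 ∩ s2.1 := Finset.mem_inter.mpr ⟨hw1s1, h⟩
      rw [hinter, Finset.mem_singleton] at this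
      exact hw1x1 this
    -- full distinctness of the five vertices j, w1, x1, w2, x2
    have hjw1 : j ≠ w1 := Ne.symm hw1j
    have hjw2 : j ≠ w2 := fun h => hjs2 (h ▸ hw2s2)
    have hw1w2 : w1 ≠ w2 := fun h => hw1s2 (h ▸ hw2s2)
    have hw1x2 : w1 ≠ x2 := fun h => hx2s1 (h ▸ hw1s1)
    have hx1w2 : x1 ≠ w2 := Ne.symm hw2x1
    have h5card : ({j, w1, x1, w2, x2} : Finset S).card = 5 :=
      card5 hjw1 hjx1 hjw2 hjx2 hw1x1 hw1w2 hw1x2 hx1w2 hx1x2 hw2x2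
    have hT1 : ({j, w1, x1} : Finset S).card = 3 := by rw [← hs1eq]; exact s1.2
    have hT2 : ({x1, w2, x2} : Finset S).card = 3 := by rw [← hs2eq]; exact s2.2
    have hTA : ({w1, x1, w2} : Finset S).card = 3 := card3 hw1x1 hw1w2 hx1w2
    have hTB : ({w2, x2, j} : Finset S).card = 3 :=
      card3 hw2x2 (Ne.symm hjw2) (Ne.symm hjx2)
    have hTD : ({x2, j, w1} : Finset S).card = 3 :=
      card3 (Ne.symm hjx2) (Ne.symm hw1x2) hjw1
    set A : Tri S := ⟨{w1, x1, w2}, hTA⟩ with hA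
    set B : Tri S := ⟨{w2, x2, j}, hTB⟩ with hB
    set D : Tri S := ⟨{x2, j, w1}, hTD⟩ with hD
    have hjB : j ∈ B.1 := by rw [hB]; simp
    have hx2B : x2 ∈ B.1 := by rw [hB]; simp
    have hjD : j ∈ D.1 := by rw [hD]; simp
    have hx2D : x2 ∈ D.1 := by rw [hD]; simp
    -- the five-term relation
    have hfive := gT_five j w1 x1 w2 x2 h5card hT1 hT2 hTA hTB hTD
    have es1 : (⟨{j, w1, x1}, hT1⟩ : Tri S) = s1 := Subtype.ext hs1eq.symm
    have es2 : (⟨{x1, w2, x2}, hT2⟩ : Tri S) = s2 := Subtype.ext hs2eq.symm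
    rw [es1, es2, ← hA, ← hB, ← hD] at hfive
    -- case analysis on the tail chain
    rcases chainT_avoid s1 s2 tail2 with htail | ⟨u, kk, hkk, hu, hcu⟩
    · -- the tail avoids s1 and s2: rewrite with the five-term relation
      -- helper: membership in newL and connectivity, for each replacement pair
      have hmemL'' : ∀ s ∈ L, s ≠ s1 → s ≠ s2 → s ∈ L'' := by
        intro s hs hne1 hne2
        exact (List.mem_erase_of_ne hne2).mpr ((List.mem_erase_of_ne hne1).mpr hs)
      have hcover : ∀ x : S, (x ∈ s1.1 ∨ x ∈ s2.1) →
          x = j ∨ x = w1 ∨ x = x1 ∨ x = w2 ∨ x = x2 := by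
        intro x hx
        rcases hx with h | h
        · rw [hs1eq] at h; simp at h; tauto
        · rw [hs2eq] at h; simp at h; tauto
      -- generic connectivity for a replacement pair (p, q) with common vertex v
      have hpair : ∀ (p q : Tri S) (v : S), v ∈ p.1 → v ∈ q.1 →
          (∀ x : S, (x = j ∨ x = w1 ∨ x = x1 ∨ x = w2 ∨ x = x2) → x ∈ p.1 ∨ x ∈ q.1) →
          (∀ x y, reachT (p :: q :: L'') x y) := by
        intro p q v hvp hvq hcov
        apply reach_replace (s1 := s1) (s2 := s2)
        · intro s hs h1 h2
          exact List.mem_cons_of_mem _ (List.mem_cons_of_mem _ (hmemL'' s hs h1 h2))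
        · intro x y hx hy
          exact reach_pair (List.mem_cons_self)
            (List.mem_cons_of_mem _ (List.mem_cons_self)) hvp hvq
            (hcov x (hcover x hx)) (hcov y (hcover y hy))
        · exact hcon
      have hsubnew : ∀ (p q : Tri S), ∀ s ∈ L'', s ∈ p :: q :: L'' :=
        fun p q s hs => List.mem_cons_of_mem _ (List.mem_cons_of_mem _ hs)
      have hX : monoT (s1 :: s2 :: L'') =
          -(monoT (A :: B :: L'') + monoT (s2 :: D :: L'') + monoT (B :: s1 :: L'') +
            monoT (D :: A :: L'')) := by
        rw [monoT_cons s1, monoT_cons s2, ← mul_assoc, hfive]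
        simp only [monoT_cons, neg_mul, add_mul, mul_assoc]
      have hw2A : w2 ∈ A.1 := by rw [hA]; simp
      have hw2B : w2 ∈ B.1 := by rw [hB]; simp
      have hw1A : w1 ∈ A.1 := by rw [hA]; simp
      have hw1D : w1 ∈ D.1 := by rw [hD]; simp
      have hx1A : x1 ∈ A.1 := by rw [hA]; simp
      have hjs1 : j ∈ s1.1 := hj
      have hcov1 : ∀ x : S, (x = j ∨ x = w1 ∨ x = x1 ∨ x = w2 ∨ x = x2) →
          x ∈ A.1 ∨ x ∈ B.1 := by
        rintro x (rfl | rfl | rfl | rfl | rfl)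
        · exact Or.inr hjB
        · exact Or.inl hw1A
        · exact Or.inl hx1A
        · exact Or.inl hw2A
        · exact Or.inr hx2B
      have hcov2 : ∀ x : S, (x = j ∨ x = w1 ∨ x = x1 ∨ x = w2 ∨ x = x2) →
          x ∈ s2.1 ∨ x ∈ D.1 := by
        rintro x (rfl | rfl | rfl | rfl | rfl)
        · exact Or.inr hjD
        · exact Or.inr hw1D
        · exact Or.inl hx1'
        · exact Or.inl hw2s2
        · exact Or.inl hx2
      have hcov3 : ∀ x : S, (x = j ∨ x = w1 ∨ x = x1 ∨ x = w2 ∨ x = x2) →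
          x ∈ B.1 ∨ x ∈ s1.1 := by
        rintro x (rfl | rfl | rfl | rfl | rfl)
        · exact Or.inr hj
        · exact Or.inr hw1s1
        · exact Or.inr hx1
        · exact Or.inl hw2B
        · exact Or.inl hx2B
      have hcov4 : ∀ x : S, (x = j ∨ x = w1 ∨ x = x1 ∨ x = w2 ∨ x = x2) →
          x ∈ D.1 ∨ x ∈ A.1 := by
        rintro x (rfl | rfl | rfl | rfl | rfl)
        · exact Or.inl hjD
        · exact Or.inl hw1D
        · exact Or.inr hx1A
        · exact Or.inr hw2A
        · exact Or.inl hx2D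
      refine mem_of_pm hpm ?_
      rw [hX]
      refine mem_of_pm (Or.inr rfl) (add_mem (add_mem (add_mem ?_ ?_) ?_) ?_)
      · exact IH (k + 1) (by omega) _ (hpair A B w2 hw2A hw2B hcov1)
          (ChainT.cons B x2 (List.mem_cons_of_mem _ (List.mem_cons_self)) hjB hx2B
            (chainT_mono (hsubnew A B) htail))
      · exact IH (k + 1) (by omega) _ (hpair s2 D x2 hx2 hx2D hcov2)
          (ChainT.cons D x2 (List.mem_cons_of_mem _ (List.mem_cons_self)) hjD hx2D
            (chainT_mono (hsubnew s2 D) htail))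
      · exact IH (k + 1) (by omega) _ (hpair B s1 j hjB hj hcov3)
          (ChainT.cons B x2 (List.mem_cons_self) hjB hx2B
            (chainT_mono (hsubnew B s1) htail))
      · exact IH (k + 1) (by omega) _ (hpair D A w1 hw1D hw1A hcov4)
          (ChainT.cons D x2 (List.mem_cons_self) hjD hx2D
            (chainT_mono (hsubnew D A) htail))
    · -- shortcut through s1 or s2
      rcases hu with hu1 | hu2
      · exact IH (kk + 1) (by omega) L hcon (ChainT.cons s1 u hs1 hj hu1 hcu)
      · exact IH (kk + 2) (by omega) L hcon
          (ChainT.cons s1 x1 hs1 hj hx1 (ChainT.cons s2 u hs2 hx1' hu2 hcu))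

/-- In the algebra `Λ̃(S)`, for any two distinct `j, j' ∈ S`, the component `Λ̃[S]`
(spanned by the monomials whose triangle graph is connected with vertex set all of `S`)
is spanned by those monomials in which at least one triple contains both `j` and `j'`. -/
theorem tilde_span_common_triple [Fintype S] (j j' : S) (hjj : j ≠ j') :
    Submodule.span ℤ {a : TildeLambda S | ∃ L : List (Tri S),
        (∀ x y : S, reachT L x y) ∧ a = monoT L} ≤
      Submodule.span ℤ {a : TildeLambda S | ∃ L : List (Tri S),
        (∀ x y : S, reachT L x y) ∧ (∃ s ∈ L, j ∈ s.1 ∧ j' ∈ s.1) ∧ a = monoT L} := by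
  rw [Submodule.span_le]
  rintro a ⟨L, hcon, rfl⟩
  obtain ⟨n, hch⟩ := chainT_of_reach (hcon j j')
  exact main_aux j j' hjj n L hcon hch
end

section
/- In the algebra Λ̃(S), any monomial whose associated triangle graph contains a cycle is equal to zero. Consequently every nonzero monomial of degree d in Λ̃(S) with connected components forming the partition π satisfies d = (|S| - |π|)/2, and Λ̃[π] = 0 unless every part of π has odd cardinality. -/
variable {S : Type*} [DecidableEq S]

/-- A cycle in the triangle graph of the monomial `L`: a closed path of length `> 1`
with distinct edges and distinct vertices. -/
def HasCycleT (L : List (Tri S)) : Prop :=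
  ∃ (n : ℕ) (e : ℕ → Tri S) (v : ℕ → S),
    1 < n ∧
    (∀ i, 1 ≤ i → i ≤ n → e i ∈ L) ∧
    (∀ i j, 1 ≤ i → i < j → j ≤ n → e i ≠ e j) ∧
    (∀ i j, i < j → j < n → v i ≠ v j) ∧
    v n = v 0 ∧ v 0 ∈ (e 1).1 ∧ v n ∈ (e n).1 ∧
    (∀ i, 0 < i → i < n → v i ∈ (e i).1 ∧ v i ∈ (e (i + 1)).1)

namespace TMF

instance : DecidableEq (Tri S) := by unfold Tri; infer_instance

noncomputable def mk : ExteriorAlgebra ℤ (Tri S →₀ ℤ) →ₐ[ℤ] TildeLambda S :=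
  RingQuot.mkAlgHom ℤ (TRel (S := S))

lemma mk_rel {x y : ExteriorAlgebra ℤ (Tri S →₀ ℤ)} (h : TRel x y) : mk x = mk y :=
  RingQuot.mkAlgHom_rel ℤ h

noncomputable def t (s : Tri S) : TildeLambda S :=
  mk (ExteriorAlgebra.ι ℤ (Finsupp.single s 1))

lemma monoT_eq (L : List (Tri S)) : monoT L = (L.map t).prod := rfl

lemma t_sq (a : Tri S) : t a * t a = 0 := by
  rw [t, ← map_mul, ExteriorAlgebra.ι_sq_zero, map_zero]

lemma t_anticomm (a b : Tri S) : t a * t b = -(t b * t a) := by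
  have h := ExteriorAlgebra.ι_sq_zero (R := ℤ)
    (Finsupp.single a 1 + Finsupp.single b (1 : ℤ))
  rw [map_add, add_mul, mul_add, mul_add] at h
  rw [ExteriorAlgebra.ι_sq_zero, ExteriorAlgebra.ι_sq_zero] at h
  rw [zero_add, add_zero] at h
  have h2 := eq_neg_of_add_eq_zero_left h
  rw [t, t, ← map_mul, h2, map_neg, map_mul]

section perm
variable {α : Type*}

lemma prod_perm_sign {A : Type*} [Ring A] (g : α → A)
    (hg : ∀ a b, g a * g b = -(g b * g a)) {l1 l2 : List α} (h : l1.Perm l2) :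
    (l1.map g).prod = (l2.map g).prod ∨ (l1.map g).prod = -((l2.map g).prod) := by
  induction h with
  | nil => left; rfl
  | cons x h ih =>
    rcases ih with ih | ih
    · left; simp [ih]
    · right; simp [ih]
  | swap x y l =>
    right
    simp only [List.map_cons, List.prod_cons, ← mul_assoc, hg y x, neg_mul]
  | trans h1 h2 ih1 ih2 =>
    rcases ih1 with ih1 | ih1 <;> rcases ih2 with ih2 | ih2 <;>
      simp [ih1, ih2]

lemma prod_eq_zero_of_subperm {A : Type*} [Ring A] (g : α → A)
    (hg : ∀ a b, g a * g b = -(g b * g a)) {C L : List α} (h : List.Subperm C L)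
    (hC : (C.map g).prod = 0) : (L.map g).prod = 0 := by
  obtain ⟨l, hl, hsub⟩ := h
  obtain ⟨r, hr⟩ := hsub.exists_perm_append
  have hlC : (l.map g).prod = 0 := by
    rcases prod_perm_sign g hg hl with h' | h' <;> simp [h', hC]
  rcases prod_perm_sign g hg hr with h' | h' <;>
    simp [h', List.map_append, List.prod_append, hlC]

end perm

lemma monoT_eq_zero_of_not_nodup {L : List (Tri S)} (h : ¬ L.Nodup) : monoT L = 0 := by
  rw [List.nodup_iff_count_le_one] at h
  push_neg at h
  obtain ⟨a, ha⟩ := h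
  have hsub : List.Subperm [a, a] L := by
    rw [List.subperm_ext_iff]
    intro x hx
    simp only [List.mem_cons, List.not_mem_nil, or_false] at hx
    rcases hx with rfl | rfl
    all_goals
      have : List.count x [x, x] = 2 := by simp
      omega
  rw [monoT_eq]
  exact prod_eq_zero_of_subperm t t_anticomm hsub (by simp [t_sq])

lemma card3 {x y z : S} (hxy : x ≠ y) (hxz : x ≠ z) (hyz : y ≠ z) :
    ({x, y, z} : Finset S).card = 3 :=
  Finset.card_eq_three.mpr ⟨x, y, z, hxy, hxz, hyz, rfl⟩

lemma card4 {a b c d : S} (hab : a ≠ b) (hac : a ≠ c) (had : a ≠ d)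
    (hbc : b ≠ c) (hbd : b ≠ d) (hcd : c ≠ d) :
    ({a, b, c, d} : Finset S).card = 4 := by
  rw [Finset.card_insert_of_notMem (by simp [hab, hac, had]),
    Finset.card_insert_of_notMem (by simp [hbc, hbd]),
    Finset.card_insert_of_notMem (by simp [hcd]), Finset.card_singleton]

lemma card5 {a b c d e : S} (hab : a ≠ b) (hac : a ≠ c) (had : a ≠ d) (hae : a ≠ e)
    (hbc : b ≠ c) (hbd : b ≠ d) (hbe : b ≠ e) (hcd : c ≠ d) (hce : c ≠ e) (hde : d ≠ e) :
    ({a, b, c, d, e} : Finset S).card = 5 := by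
  rw [Finset.card_insert_of_notMem (by simp [hab, hac, had, hae]),
    Finset.card_insert_of_notMem (by simp [hbc, hbd, hbe]),
    Finset.card_insert_of_notMem (by simp [hcd, hce]),
    Finset.card_insert_of_notMem (by simp [hde]), Finset.card_singleton]

lemma tauE_eq {x y z : S} (h : ({x, y, z} : Finset S).card = 3) :
    mk (tauE x y z) = t (⟨{x, y, z}, h⟩ : Tri S) := by
  rw [tauE, dif_pos h]; rfl

lemma exists_third (s : Tri S) {x y : S}
    (hx : x ∈ s.1) (hy : y ∈ s.1) (hxy : x ≠ y) :
    ∃ a, a ∈ s.1 ∧ a ≠ x ∧ a ≠ y ∧ s.1 = {a, x, y} := by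
  have hsub : ({x, y} : Finset S) ⊆ s.1 := by
    intro u hu; simp only [Finset.mem_insert, Finset.mem_singleton] at hu
    rcases hu with rfl | rfl <;> assumption
  have hcard2 : ({x, y} : Finset S).card = 2 := by
    rw [Finset.card_insert_of_notMem (by simp [hxy]), Finset.card_singleton]
  have hne : ({x, y} : Finset S) ≠ s.1 := by
    intro h; rw [h, s.2] at hcard2; omega
  obtain ⟨a, ha, hanot⟩ := Finset.exists_of_ssubset (hsub.ssubset_of_ne hne)
  simp only [Finset.mem_insert, Finset.mem_singleton, not_or] at hanot
  refine ⟨a, ha, hanot.1, hanot.2, ?_⟩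
  refine (Finset.eq_of_subset_of_card_le ?_ ?_).symm
  · intro u hu; simp only [Finset.mem_insert, Finset.mem_singleton] at hu
    rcases hu with rfl | rfl | rfl <;> assumption
  · rw [s.2, card3 hanot.1 hanot.2 hxy]

lemma t_mul_t_share_two {s u : Tri S} {x y : S} (hxs : x ∈ s.1) (hys : y ∈ s.1)
    (hxu : x ∈ u.1) (hyu : y ∈ u.1) (hxy : x ≠ y) : t s * t u = 0 := by
  by_cases hsu : s = u
  · rw [hsu, t_sq]
  obtain ⟨a, _, hax, hay, hs⟩ := exists_third s hxs hys hxy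
  obtain ⟨b, _, hbx, hby, hu⟩ := exists_third u hxu hyu hxy
  have hab : a ≠ b := by
    intro h; exact hsu (Subtype.ext (by rw [hs, hu, h]))
  have hc4 : ({a, x, y, b} : Finset S).card = 4 :=
    card4 hax hay hab hxy hbx.symm hby.symm
  have hrel := mk_rel (TRel.short a x y b hc4)
  rw [map_mul, map_zero] at hrel
  rw [tauE_eq (card3 hax hay hxy), tauE_eq (card3 hxy hbx.symm hby.symm)] at hrel
  have hseq : s = ⟨{a, x, y}, card3 hax hay hxy⟩ := Subtype.ext hs
  have hueq : u = ⟨{x, y, b}, card3 hxy hbx.symm hby.symm⟩ := by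
    refine Subtype.ext ?_
    rw [hu]; ext w
    simp only [Finset.mem_insert, Finset.mem_singleton]; tauto
  rw [hseq, hueq]; exact hrel

lemma five_expand {i j k l p : S}
    (hij : i ≠ j) (hik : i ≠ k) (hil : i ≠ l) (hip : i ≠ p)
    (hjk : j ≠ k) (hjl : j ≠ l) (hjp : j ≠ p)
    (hkl : k ≠ l) (hkp : k ≠ p) (hlp : l ≠ p) :
    t ⟨{i,j,k}, card3 hij hik hjk⟩ * t ⟨{k,l,p}, card3 hkl hkp hlp⟩ +
    t ⟨{j,k,l}, card3 hjk hjl hkl⟩ * t ⟨{l,p,i}, card3 hlp hil.symm hip.symm⟩ +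
    t ⟨{k,l,p}, card3 hkl hkp hlp⟩ * t ⟨{p,i,j}, card3 hip.symm hjp.symm hij⟩ +
    t ⟨{l,p,i}, card3 hlp hil.symm hip.symm⟩ * t ⟨{i,j,k}, card3 hij hik hjk⟩ +
    t ⟨{p,i,j}, card3 hip.symm hjp.symm hij⟩ * t ⟨{j,k,l}, card3 hjk hjl hkl⟩ = 0 := by
  have hc5 : ({i, j, k, l, p} : Finset S).card = 5 :=
    card5 hij hik hil hip hjk hjl hjp hkl hkp hlp
  have hrel := mk_rel (TRel.five i j k l p hc5)
  simp only [map_add, map_mul, map_zero] at hrel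
  rw [tauE_eq (card3 hij hik hjk), tauE_eq (card3 hkl hkp hlp),
    tauE_eq (card3 hjk hjl hkl), tauE_eq (card3 hlp hil.symm hip.symm),
    tauE_eq (card3 hip.symm hjp.symm hij)] at hrel
  exact hrel

section decomp
variable {M : Type*} [Monoid M]

lemma decomp1 (g : ℕ → M) (k : ℕ) :
    ((List.range (k+1)).map (fun i => g (i+1))).prod =
      g 1 * ((List.range k).map (fun i => g (i+2))).prod := by
  rw [List.range_succ_eq_map]
  simp only [List.map_cons, List.map_map, List.prod_cons, Nat.zero_add]
  congr 1

lemma decomp2 (g : ℕ → M) (k : ℕ) :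
    ((List.range (k+2)).map (fun i => g (i+1))).prod =
      g 1 * (g 2 * ((List.range k).map (fun i => g (i+3))).prod) := by
  rw [decomp1 g (k+1)]
  congr 1
  exact decomp1 (fun j => g (j+1)) k

end decomp

lemma final_alg {R : Type*} [Ring R] {A B g1 g2 g4 Q : R}
    (h5 : A*B + g1*g2 + B*g4 + g2*A + g4*g1 = 0)
    (k2 : g2*Q = 0) (k4 : g4*Q = 0)
    (hAg2 : g2*A = -(A*g2)) (hg4g1 : g4*g1 = -(g1*g4)) : A*B*Q = 0 := by
  rw [add_assoc, add_assoc, add_assoc] at h5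
  have h5' := eq_neg_of_add_eq_zero_left h5
  rw [h5', hAg2, hg4g1]
  simp only [neg_mul, add_mul, mul_assoc, k2, k4, mul_zero, neg_zero, add_zero, neg_add_rev,
    mul_neg, zero_add, neg_neg, add_neg_cancel, neg_eq_zero]

lemma cycle_prod_zero :
    ∀ n, 2 ≤ n → ∀ (f : ℕ → Tri S) (v : ℕ → S),
    (∀ i j, i < j → j < n → v i ≠ v j) → v n = v 0 →
    v 0 ∈ (f 1).1 → v n ∈ (f n).1 →
    (∀ i, 0 < i → i < n → v i ∈ (f i).1 ∧ v i ∈ (f (i+1)).1) →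
    ((List.range n).map (fun i => t (f (i+1)))).prod = 0 := by
  intro n
  induction n using Nat.strong_induction_on with
  | _ n IH =>
    intro hn f v hdist hvn hv0 hvnf hmid
    obtain ⟨m, rfl⟩ : ∃ m, n = m + 2 := ⟨n - 2, by omega⟩
    have h1 := hmid 1 (by omega) (by omega)
    have hd01 : v 0 ≠ v 1 := hdist 0 1 (by omega) (by omega)
    have hdec : ((List.range (m+2)).map (fun i => t (f (i+1)))).prod =
        t (f 1) * (t (f 2) * ((List.range m).map (fun i => t (f (i+3)))).prod) :=
      decomp2 (fun i => t (f i)) m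
    rw [hdec]
    set Q := ((List.range m).map (fun i => t (f (i+3)))).prod with hQdef
    by_cases hshare : ∃ w, w ∈ (f 1).1 ∧ w ∈ (f 2).1 ∧ w ≠ v 1
    · obtain ⟨w, hw1, hw2, hwv⟩ := hshare
      rw [← mul_assoc, t_mul_t_share_two h1.1 hw1 h1.2 hw2 (Ne.symm hwv), zero_mul]
    · push_neg at hshare
      have hm1 : 1 ≤ m := by
        rcases Nat.eq_zero_or_pos m with rfl | h
        · exact absurd (hshare (v 0) hv0 (by rw [← hvn]; exact hvnf)) hd01
        · exact h
      obtain ⟨m', rfl⟩ : ∃ m', m = m' + 1 := ⟨m - 1, by omega⟩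
      have h2 := hmid 2 (by omega) (by omega)
      have hd12 : v 1 ≠ v 2 := hdist 1 2 (by omega) (by omega)
      have hd02 : v 0 ≠ v 2 := hdist 0 2 (by omega) (by omega)
      obtain ⟨j, hjf1, hjv0, hjv1, hf1eq⟩ := exists_third (f 1) hv0 h1.1 hd01
      obtain ⟨l, hlf2, hlv1, hlv2, hf2eq⟩ := exists_third (f 2) h1.2 h2.1 hd12
      have hij : v 0 ≠ j := hjv0.symm
      have hil : v 0 ≠ l := by
        intro h; exact hd01 (hshare (v 0) hv0 (by rw [h]; exact hlf2))
      have hjl : j ≠ l := by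
        intro h; exact hjv1 (hshare j hjf1 (by rw [h]; exact hlf2))
      have hjp : j ≠ v 2 := by
        intro h
        exact hd12.symm (hshare (v 2) (by rw [← h]; exact hjf1) h2.1)
      have hik := hd01
      have hip := hd02
      have hjk := hjv1
      have hkl := hlv1.symm
      have hkp := hd12
      have hlp := hlv2
      -- the new first triangle for the shorter cycle must contain v 0 and v 2
      have key : ∀ G : Tri S, v 0 ∈ G.1 → v 2 ∈ G.1 → t G * Q = 0 := by
        intro G hG0 hG2
        set f' : ℕ → Tri S := fun idx =>
          match idx with
          | 0 => G
          | 1 => G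
          | (k+2) => f (k+3) with hf'
        set v' : ℕ → S := fun idx =>
          match idx with
          | 0 => v 0
          | (k+1) => v (k+2) with hv'
        have hIH := IH (m'+2) (by omega) (by omega) f' v'
          (by
            intro a b hab hb
            cases a with
            | zero =>
              cases b with
              | zero => omega
              | succ bk => exact hdist 0 (bk+2) (by omega) (by omega)
            | succ ak =>
              cases b with
              | zero => omega
              | succ bk => exact hdist (ak+2) (bk+2) (by omega) (by omega))
          (by exact hvn)
          (by exact hG0)
          (by exact hvnf)
          (by
            intro a ha0 ha
            rcases a with _ | _ | ak
            · omega
            · exact ⟨hG2, h2.2⟩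
            · exact hmid (ak+3) (by omega) (by omega))
        exact ((decomp1 (fun i => t (f' i)) (m'+1)).symm).trans hIH
      have hf1A : f 1 = ⟨{v 0, j, v 1}, card3 hij hik hjk⟩ := by
        refine Subtype.ext ?_
        rw [hf1eq]; ext w
        simp only [Finset.mem_insert, Finset.mem_singleton]; tauto
      have hf2B : f 2 = ⟨{v 1, l, v 2}, card3 hkl hkp hlp⟩ := by
        refine Subtype.ext ?_
        rw [hf2eq]; ext w
        simp only [Finset.mem_insert, Finset.mem_singleton]; tauto
      have h5 := five_expand hij hik hil hip hjk hjl hjp hkl hkp hlp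
      have k2 : t ⟨{l, v 2, v 0}, card3 hlp hil.symm hip.symm⟩ * Q = 0 :=
        key _ (by simp) (by simp)
      have k4 : t ⟨{v 2, v 0, j}, card3 hip.symm hjp.symm hij⟩ * Q = 0 :=
        key _ (by simp) (by simp)
      rw [hf1A, hf2B, ← mul_assoc]
      exact final_alg h5 k2 k4 (t_anticomm _ _) (t_anticomm _ _)

theorem monoT_eq_zero_of_hasCycle {L : List (Tri S)} (h : HasCycleT L) : monoT L = 0 := by
  obtain ⟨n, e, v, hn, heL, hedist, hvdist, hvn, hv0, hvnf, hmid⟩ := h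
  have hprod := cycle_prod_zero n hn e v hvdist hvn hv0 hvnf hmid
  set C : List (Tri S) := (List.range n).map (fun i => e (i+1)) with hC
  have hCprod : (C.map t).prod = 0 := by
    rw [hC, List.map_map]; exact hprod
  have hCnodup : C.Nodup := by
    refine List.Nodup.map_on ?_ List.nodup_range
    intro x hx y hy hxy
    rw [List.mem_range] at hx hy
    by_contra hne
    rcases Nat.lt_or_ge x y with h' | h'
    · exact hedist (x+1) (y+1) (by omega) (by omega) (by omega) hxy
    · exact hedist (y+1) (x+1) (by omega) (by omega) (by omega) hxy.symm
  have hCsub : C ⊆ L := by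
    intro a ha
    rw [hC, List.mem_map] at ha
    obtain ⟨i, hi, rfl⟩ := ha
    rw [List.mem_range] at hi
    exact heL (i+1) (by omega) (by omega)
  rw [monoT_eq]
  exact prod_eq_zero_of_subperm t t_anticomm (hCnodup.subperm hCsub) hCprod


lemma reach_symm {L : List (Tri S)} {x y : S} (h : reachT L x y) : reachT L y x :=
  by
    haveI : Std.Symm (stepT L) := ⟨fun _ _ ⟨s, hs, h1, h2⟩ => ⟨s, hs, h2, h1⟩⟩
    exact Relation.ReflTransGen.symmetric.symm _ _ h

lemma reach_trans {L : List (Tri S)} {x y z : S} (h : reachT L x y) (h' : reachT L y z) :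
    reachT L x z := Relation.ReflTransGen.trans h h'

lemma reach_nil {x y : S} : reachT ([] : List (Tri S)) x y ↔ x = y := by
  constructor
  · intro h
    induction h with
    | refl => rfl
    | tail _ hbc ih => obtain ⟨s, hs, -⟩ := hbc; exact absurd hs List.not_mem_nil
  · rintro rfl; exact Relation.ReflTransGen.refl

lemma reach_chain {L : List (Tri S)} {x y : S} (d : Tri S) (h : reachT L x y) :
    ∃ (k : ℕ) (w : ℕ → S) (g : ℕ → Tri S), w 0 = x ∧ w k = y ∧
      ∀ i < k, g i ∈ L ∧ w i ∈ (g i).1 ∧ w (i+1) ∈ (g i).1 := by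
  induction h with
  | refl => exact ⟨0, fun _ => x, fun _ => d, rfl, rfl, by omega⟩
  | @tail b c hab hbc ih =>
    obtain ⟨k, w, g, hw0, hwk, hch⟩ := ih
    obtain ⟨s, hsL, hbs, hcs⟩ := hbc
    refine ⟨k+1, fun i => if i ≤ k then w i else c, fun i => if i < k then g i else s,
      ?_, ?_, ?_⟩
    · beta_reduce; rw [if_pos (by omega)]; exact hw0
    · beta_reduce; rw [if_neg (by omega)]
    · intro i hi
      beta_reduce
      by_cases hik : i < k
      · rw [if_pos hik, if_pos (by omega), if_pos (by omega)]
        exact hch i hik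
      · have : i = k := by omega
        subst this
        rw [if_neg (by omega), if_pos (by omega), if_neg (by omega)]
        exact ⟨hsL, hwk ▸ hbs, hcs⟩

lemma hasCycle_of_chain {L : List (Tri S)} {e : Tri S} (heL : e ∉ L) {x y : S}
    (hx : x ∈ e.1) (hy : y ∈ e.1) (hxy : x ≠ y) :
    ∀ k (w : ℕ → S) (g : ℕ → Tri S), w 0 = x → w k = y →
      (∀ i < k, g i ∈ L ∧ w i ∈ (g i).1 ∧ w (i+1) ∈ (g i).1) →
      HasCycleT (e :: L) := by
  intro k
  induction k using Nat.strong_induction_on with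
  | _ k IH =>
    intro w g hw0 hwk hch
    rcases Nat.eq_zero_or_pos k with rfl | hk
    · exact absurd (hw0.symm.trans hwk) hxy
    by_cases hvrep : ∃ a b, a < b ∧ b ≤ k ∧ w a = w b
    · obtain ⟨a, b, hab, hbk, hwab⟩ := hvrep
      refine IH (k - (b - a)) (by omega)
        (fun i => if i ≤ a then w i else w (i + (b - a)))
        (fun i => if i < a then g i else g (i + (b - a))) ?_ ?_ ?_
      · beta_reduce; rw [if_pos (by omega)]; exact hw0
      · beta_reduce
        by_cases h' : k - (b - a) ≤ a
        · rw [if_pos h']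
          have h1 : k - (b-a) = a := by omega
          have h2 : b = k := by omega
          rw [h1, hwab, h2, hwk]
        · rw [if_neg h', show k - (b-a) + (b-a) = k by omega, hwk]
      · intro i hi
        beta_reduce
        by_cases hia : i < a
        · rw [if_pos hia, if_pos (by omega), if_pos (by omega)]
          exact hch i (by omega)
        · by_cases hia' : i ≤ a
          · have : i = a := by omega
            subst this
            have hbklt : b < k := by omega
            have h1 := hch b hbklt
            rw [if_neg (lt_irrefl i), if_pos (le_refl i), if_neg (by omega),
              show i + (b - i) = b by omega, show i+1+(b-i) = b + 1 by omega, hwab]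
            exact ⟨h1.1, h1.2.1, h1.2.2⟩
          · have h0 := hch (i + (b-a)) (by omega)
            rw [if_neg hia, if_neg hia', if_neg (by omega),
              show i+1+(b-a) = i + (b-a) + 1 by omega]
            exact ⟨h0.1, h0.2.1, h0.2.2⟩
    by_cases herep : ∃ a b, a < b ∧ b < k ∧ g a = g b
    · obtain ⟨a, b, hab, hbk, hgab⟩ := herep
      refine IH (k - (b - a)) (by omega)
        (fun i => if i ≤ a then w i else w (i + (b - a)))
        (fun i => if i ≤ a then g i else g (i + (b - a))) ?_ ?_ ?_
      · beta_reduce; rw [if_pos (by omega)]; exact hw0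
      · beta_reduce; rw [if_neg (by omega), show k - (b-a) + (b-a) = k by omega, hwk]
      · intro i hi
        beta_reduce
        by_cases hia' : i ≤ a
        · by_cases hia : i < a
          · rw [if_pos hia', if_pos hia', if_pos (by omega)]
            exact hch i (by omega)
          · have : i = a := by omega
            subst this
            have h0 := hch i (by omega)
            have h1 := hch b (by omega)
            rw [if_pos (le_refl i), if_pos (le_refl i), if_neg (by omega),
              show i+1+(b-i) = b + 1 by omega, hgab] at *
            exact ⟨h0.1, h0.2.1, h1.2.2⟩
          
        · have h0 := hch (i + (b-a)) (by omega)
          rw [if_neg hia', if_neg hia', if_neg (by omega),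
            show i+1+(b-a) = i + (b-a) + 1 by omega]
          exact ⟨h0.1, h0.2.1, h0.2.2⟩
    · push_neg at hvrep herep
      refine ⟨k+1, fun i => if i ≤ k then g (i-1) else e,
        fun i => if i ≤ k then w i else x, by omega, ?_, ?_, ?_, ?_, ?_, ?_, ?_⟩
      · intro i h1i hik
        beta_reduce
        by_cases hik' : i ≤ k
        · rw [if_pos hik']
          exact List.mem_cons_of_mem e (hch (i-1) (by omega)).1
        · rw [if_neg hik']
          exact List.mem_cons_self
      · intro i jj h1i hij hjk
        beta_reduce
        by_cases hjk' : jj ≤ k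
        · rw [if_pos (by omega), if_pos hjk']
          intro hgg
          exact herep (i-1) (jj-1) (by omega) (by omega) hgg
        · rw [if_pos (by omega), if_neg hjk']
          intro hgg
          exact heL (hgg ▸ (hch (i-1) (by omega)).1)
      · intro i jj hij hjk
        beta_reduce
        rw [if_pos (by omega), if_pos (by omega)]
        exact hvrep i jj hij (by omega)
      · beta_reduce
        rw [if_neg (by omega), if_pos (by omega), hw0]
      · beta_reduce
        rw [if_pos (by omega), if_pos (by omega)]
        exact (hch 0 (by omega)).2.1
      · beta_reduce
        rw [if_neg (by omega), if_neg (by omega)]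
        exact hx
      · intro i hi0 hik
        beta_reduce
        rw [if_pos (by omega), if_pos (by omega)]
        constructor
        · have := (hch (i-1) (by omega)).2.2
          rwa [show i-1+1 = i by omega] at this
        · by_cases hik' : i + 1 ≤ k
          · rw [if_pos hik']
            have := (hch i (by omega)).2.1
            rwa [show i + 1 - 1 = i by omega]
          · rw [if_neg hik']
            have : i = k := by omega
            subst this
            rw [hwk]
            exact hy


-- new material starts here
lemma reach_mono {L L' : List (Tri S)} (hsub : ∀ u ∈ L, u ∈ L') {x y : S}
    (h : reachT L x y) : reachT L' x y := by
  induction h with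
  | refl => exact Relation.ReflTransGen.refl
  | tail _ hbc ih =>
    obtain ⟨s, hs, h1, h2⟩ := hbc
    exact ih.tail ⟨s, hsub s hs, h1, h2⟩

lemma hasCycle_cons {s : Tri S} {L : List (Tri S)} (h : HasCycleT L) :
    HasCycleT (s :: L) := by
  obtain ⟨n, e, v, hn, heL, h3, h4, h5, h6, h7, h8⟩ := h
  exact ⟨n, e, v, hn, fun i hi hi' => List.mem_cons_of_mem s (heL i hi hi'),
    h3, h4, h5, h6, h7, h8⟩

lemma reach_cons {s : Tri S} {L : List (Tri S)} {u w : S} :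
    reachT (s :: L) u w ↔ reachT L u w ∨
      ∃ p ∈ s.1, ∃ q ∈ s.1, reachT L u p ∧ reachT L q w := by
  constructor
  · intro h
    induction h with
    | refl => left; exact Relation.ReflTransGen.refl
    | @tail b c hab hbc ih =>
      obtain ⟨e, he, hbe, hce⟩ := hbc
      rw [List.mem_cons] at he
      rcases he with rfl | heL
      · rcases ih with ih | ⟨p, hp, q, hq, hup, hqb⟩
        · right; exact ⟨b, hbe, c, hce, ih, Relation.ReflTransGen.refl⟩
        · right; exact ⟨p, hp, c, hce, hup, Relation.ReflTransGen.refl⟩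
      · rcases ih with ih | ⟨p, hp, q, hq, hup, hqb⟩
        · left; exact ih.tail ⟨e, heL, hbe, hce⟩
        · right; exact ⟨p, hp, q, hq, hup, hqb.tail ⟨e, heL, hbe, hce⟩⟩
  · intro h
    rcases h with h | ⟨p, hp, q, hq, hup, hqw⟩
    · exact reach_mono (fun u hu => List.mem_cons_of_mem s hu) h
    · refine reach_trans (reach_trans
        (reach_mono (fun u hu => List.mem_cons_of_mem s hu) hup) ?_)
        (reach_mono (fun u hu => List.mem_cons_of_mem s hu) hqw)
      exact Relation.ReflTransGen.single ⟨s, List.mem_cons_self, hp, hq⟩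

lemma cl_eq_of_reach {L : List (Tri S)} {x y : S} (h : reachT L x y) :
    {z | reachT L x z} = {z | reachT L y z} := by
  ext z
  exact ⟨fun hz => reach_trans (reach_symm h) hz, fun hz => reach_trans h hz⟩

lemma reach_of_cl_eq {L : List (Tri S)} {x y : S}
    (h : {z | reachT L x z} = {z | reachT L y z}) : reachT L x y := by
  have : y ∈ {z | reachT L y z} := Relation.ReflTransGen.refl
  rw [← h] at this
  exact this

theorem forest_count [Fintype S] :
    ∀ L : List (Tri S), L.Nodup → ¬ HasCycleT L →
      (2 * L.length + Nat.card {C : Set S // ∃ x : S, C = {y | reachT L x y}} =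
          Fintype.card S ∧
       ∀ x : S, Odd ({y | reachT L x y} : Set S).ncard) := by
  intro L
  induction L with
  | nil =>
    intro _ _
    have hcl : ∀ x : S, {y | reachT ([] : List (Tri S)) x y} = {x} := by
      intro x; ext y
      simp only [Set.mem_setOf_eq, reach_nil, Set.mem_singleton_iff, eq_comm]
    constructor
    · have e : S ≃ {C : Set S // ∃ x : S, C = {y | reachT ([] : List (Tri S)) x y}} := by
        refine Equiv.ofBijective (fun x => ⟨{y | reachT ([] : List (Tri S)) x y}, x, rfl⟩)
          ⟨?_, ?_⟩
        · intro x x' h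
          have h' := congrArg Subtype.val h
          simp only at h'
          rw [hcl x, hcl x'] at h'
          exact Set.singleton_eq_singleton_iff.mp h'
        · rintro ⟨C, x, hC⟩
          exact ⟨x, Subtype.ext hC.symm⟩
      rw [← Nat.card_congr e, Nat.card_eq_fintype_card]
      simp
    · intro x
      rw [hcl x, Set.ncard_singleton]
      exact odd_one
  | cons s L' IH =>
    intro hnodup hnc
    rw [List.nodup_cons] at hnodup
    obtain ⟨hsL', hnodup'⟩ := hnodup
    have hnc' : ¬ HasCycleT L' := fun h => hnc (hasCycle_cons h)
    obtain ⟨IH1, IH2⟩ := IH hnodup' hnc'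
    obtain ⟨a, b, c, hab, hac, hbc, hs⟩ := Finset.card_eq_three.mp s.2
    have ha : a ∈ s.1 := by rw [hs]; simp
    have hb : b ∈ s.1 := by rw [hs]; simp
    have hc : c ∈ s.1 := by rw [hs]; simp
    have hsep : ∀ p ∈ s.1, ∀ q ∈ s.1, p ≠ q → ¬ reachT L' p q := by
      intro p hp q hq hpq hreach
      obtain ⟨k, w, g, hw0, hwk, hch⟩ := reach_chain s hreach
      exact hnc (hasCycle_of_chain hsL' hp hq hpq k w g hw0 hwk hch)
    -- notation
    set M : Set S := {y | ∃ q ∈ s.1, reachT L' q y} with hM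
    have hMx : ∀ x, x ∈ M → {y | reachT (s :: L') x y} = M := by
      intro x ⟨qx, hqx, hqxx⟩
      ext y
      simp only [Set.mem_setOf_eq, hM]
      constructor
      · intro hy
        rw [reach_cons] at hy
        rcases hy with hy | ⟨p, hp, q, hq, hxp, hqy⟩
        · exact ⟨qx, hqx, reach_trans hqxx hy⟩
        · exact ⟨q, hq, hqy⟩
      · rintro ⟨qy, hqy, hqyy⟩
        rw [reach_cons]
        right
        exact ⟨qx, hqx, qy, hqy, reach_symm hqxx, hqyy⟩
    have hMnx : ∀ x, x ∉ M → {y | reachT (s :: L') x y} = {y | reachT L' x y} := by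
      intro x hx
      ext y
      simp only [Set.mem_setOf_eq]
      rw [reach_cons]
      constructor
      · intro hy
        rcases hy with hy | ⟨p, hp, q, hq, hxp, hqy⟩
        · exact hy
        · exact absurd ⟨p, hp, reach_symm hxp⟩ hx
      · exact Or.inl
    have hdisj : ∀ p ∈ s.1, ∀ q ∈ s.1, p ≠ q →
        Disjoint {y | reachT L' p y} {y | reachT L' q y} := by
      intro p hp q hq hpq
      rw [Set.disjoint_left]
      intro y hy hy'
      exact hsep p hp q hq hpq (reach_trans hy (reach_symm hy'))
    have hMdecomp : M = {y | reachT L' a y} ∪ {y | reachT L' b y} ∪ {y | reachT L' c y} := by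
      ext y
      simp only [hM, Set.mem_setOf_eq, Set.mem_union, hs, Finset.mem_insert,
        Finset.mem_singleton]
      constructor
      · rintro ⟨q, (rfl | rfl | rfl), hq⟩
        · exact Or.inl (Or.inl hq)
        · exact Or.inl (Or.inr hq)
        · exact Or.inr hq
      · rintro ((h | h) | h)
        · exact ⟨a, Or.inl rfl, h⟩
        · exact ⟨b, Or.inr (Or.inl rfl), h⟩
        · exact ⟨c, Or.inr (Or.inr rfl), h⟩
    -- oddness first
    have hodd : ∀ x : S, Odd ({y | reachT (s :: L') x y} : Set S).ncard := by
      intro x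
      by_cases hx : x ∈ M
      · rw [hMx x hx, hMdecomp]
        have d1 : Disjoint ({y | reachT L' a y} ∪ {y | reachT L' b y})
            {y | reachT L' c y} := by
          rw [Set.disjoint_union_left]
          exact ⟨hdisj a ha c hc hac, hdisj b hb c hc hbc⟩
        rw [Set.ncard_union_eq d1, Set.ncard_union_eq (hdisj a ha b hb hab)]
        obtain ⟨ka, hka⟩ := IH2 a
        obtain ⟨kb, hkb⟩ := IH2 b
        obtain ⟨kc, hkc⟩ := IH2 c
        exact ⟨ka + kb + kc + 1, by omega⟩
      · rw [hMnx x hx]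
        exact IH2 x
    refine ⟨?_, hodd⟩
    -- counting
    have hcard_eq : ∀ K : List (Tri S),
        Nat.card {C : Set S // ∃ x : S, C = {y | reachT K x y}} =
          (Set.range (fun x => {y | reachT K x y})).ncard := by
      intro K
      rw [← Nat.card_coe_set_eq]
      exact Nat.card_congr (Equiv.subtypeEquivRight (by
        intro C
        simp only [Set.mem_range, eq_comm]))
    rw [hcard_eq]
    rw [hcard_eq] at IH1
    set rc' := Set.range (fun x => {y | reachT L' x y}) with hrc'
    set A := {y | reachT L' a y} with hA
    set B := {y | reachT L' b y} with hB
    set Cc := {y | reachT L' c y} with hCc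
    set T : Set (Set S) := {A, B, Cc} with hT
    have hTsub : T ⊆ rc' := by
      rintro C (rfl | rfl | rfl)
      · exact ⟨a, rfl⟩
      · exact ⟨b, rfl⟩
      · exact ⟨c, rfl⟩
    have hclsne : ∀ p ∈ s.1, ∀ q ∈ s.1, p ≠ q →
        {y | reachT L' p y} ≠ {y | reachT L' q y} := by
      intro p hp q hq hpq h
      exact hsep p hp q hq hpq (reach_of_cl_eq h)
    have hTcard : T.ncard = 3 := by
      rw [hT, Set.ncard_insert_of_notMem (by
          simp only [Set.mem_insert_iff, Set.mem_singleton_iff]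
          push_neg
          exact ⟨hclsne a ha b hb hab, hclsne a ha c hc hac⟩),
        Set.ncard_insert_of_notMem (by
          simp only [Set.mem_singleton_iff]
          exact hclsne b hb c hc hbc),
        Set.ncard_singleton]
    have hMnotin : M ∉ rc' := by
      rintro ⟨z, hz⟩
      simp only at hz
      have hzM : z ∈ M := by rw [← hz]; exact Relation.ReflTransGen.refl
      obtain ⟨q, hq, hqz⟩ := hzM
      have hzq : {y | reachT L' z y} = {y | reachT L' q y} :=
        cl_eq_of_reach (reach_symm hqz)
      -- pick q' ∈ s.1 distinct from q
      obtain ⟨q', hq', hqq'⟩ : ∃ q' ∈ s.1, q' ≠ q := by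
        by_cases h : q = a
        · exact ⟨b, hb, by rw [h]; exact hab.symm⟩
        · exact ⟨a, ha, fun h' => h h'.symm⟩
      have hq'M : q' ∈ M := ⟨q', hq', Relation.ReflTransGen.refl⟩
      rw [← hz, hzq] at hq'M
      exact hsep q hq q' hq' (fun h => hqq' h.symm) hq'M
    have hrange : Set.range (fun x => {y | reachT (s :: L') x y}) =
        (rc' \ T) ∪ {M} := by
      ext C
      constructor
      · rintro ⟨x, hx⟩
        simp only at hx
        by_cases hxM : x ∈ M
        · right; rw [← hx, hMx x hxM]; rfl
        · left
          rw [← hx, hMnx x hxM]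
          refine ⟨⟨x, rfl⟩, ?_⟩
          rintro (h | h | h)
          · exact hxM (by
              rw [hA] at h
              exact ⟨a, ha, reach_symm (reach_of_cl_eq h)⟩)
          · exact hxM ⟨b, hb, reach_symm (reach_of_cl_eq (hB ▸ h))⟩
          · exact hxM ⟨c, hc, reach_symm (reach_of_cl_eq (hCc ▸ h))⟩
      · rintro (⟨⟨z, hz⟩, hznot⟩ | hCM)
        · simp only at hz
          have hzM : z ∉ M := by
            rintro ⟨q, hq, hqz⟩
            apply hznot
            rw [← hz]
            have : {y | reachT L' z y} = {y | reachT L' q y} :=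
              cl_eq_of_reach (reach_symm hqz)
            rw [this]
            rw [hs] at hq
            simp only [Finset.mem_insert, Finset.mem_singleton] at hq
            rcases hq with rfl | rfl | rfl
            · exact Or.inl rfl
            · exact Or.inr (Or.inl rfl)
            · exact Or.inr (Or.inr rfl)
          exact ⟨z, by beta_reduce; rw [hMnx z hzM, hz]⟩
        · rw [Set.mem_singleton_iff] at hCM
          subst hCM
          exact ⟨a, by beta_reduce; exact hMx a ⟨a, ha, Relation.ReflTransGen.refl⟩⟩
    rw [hrange, Set.union_singleton,
      Set.ncard_insert_of_notMem (fun h => hMnotin h.1),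
      Set.ncard_diff hTsub, hTcard]
    have hge3 : 3 ≤ rc'.ncard := by
      rw [← hTcard]
      exact Set.ncard_le_ncard hTsub (Set.toFinite _)
    simp only [List.length_cons]
    omega


end TMF

/-- In `Λ̃(S)`: any monomial whose triangle graph contains a cycle vanishes; consequently a
nonzero monomial of degree `d` whose components form the partition `π` satisfies
`d = (|S| - |π|)/2` (i.e. `2d + |π| = |S|`), and every part of `π` has odd cardinality
(so `Λ̃[π] = 0` unless all parts of `π` are odd). -/
theorem tilde_monomials_forests [Fintype S] (L : List (Tri S)) :
    (HasCycleT L → monoT L = 0) ∧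
    (monoT L ≠ 0 →
      2 * L.length + Nat.card {C : Set S // ∃ x : S, C = {y | reachT L x y}} =
          Fintype.card S ∧
      ∀ x : S, Odd ({y | reachT L x y} : Set S).ncard) := by
  constructor
  · exact TMF.monoT_eq_zero_of_hasCycle
  · intro hm
    have hnodup : L.Nodup := by
      by_contra h
      exact hm (TMF.monoT_eq_zero_of_not_nodup h)
    have hnc : ¬ HasCycleT L := fun h => hm (TMF.monoT_eq_zero_of_hasCycle h)
    exact TMF.forest_count L hnodup hnc
end

section
/- In the Lie algebra L over a field generated by antisymmetric elements μ_{ijk} (1 ≤ i,j,k ≤ n, distinct indices) with relations Σ_i μ_{ijk} = 0 (sum over i distinct from fixed j,k) and [μ_{ijk}, μ_{pqr}] = 0 for {i,j,k} ∩ {p,q,r} = ∅, the following holds: given any Lie algebra 𝔤 and an invariant element φ ∈ (∧³𝔤)^𝔤, the assignment μ_{ijk} ↦ φ_{ijk} ∈ U(𝔤)^{⊗(n-1)} defines a Lie algebra homomorphism L → U(𝔤)^{⊗(n-1)}. -/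
/-!
The generator `μ_{ijl}` with `i, j, l < n` goes to `φ` placed in the tensor factors `i, j, l`.
The index `n` (`Fin.last m` below, where `n = m + 1`) has no tensor factor: `μ_{njl}` goes to
`-∑_i φ_{ijl}`, the value forced by the relation `∑_i μ_{ijl} = 0`, and the other positions of
`n` are filled in by antisymmetry. The antisymmetry and sum relations then follow from the
antisymmetry of `φ`.

For disjoint index sets, two images of generators either live in disjoint tensor factors, and
commute, or one of them is `∑_{m ∉ {a, b}} φ_{mab} = ∑_s Δ(x_s) y_s^{(a)} z_s^{(b)}` with
`Δ(x) = ∑_{m ∉ {a, b}} x^{(m)}`, and the other is `φ_{pqr}` with `p, q, r ∉ {a, b}`. Then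
`y_s^{(a)} z_s^{(b)}` commutes with `φ_{pqr}`, and `⁅Δ(x), φ_{pqr}⁆` is the action of `x` on `φ`
placed in the factors `p, q, r`, which vanishes by invariance.
-/

open scoped TensorProduct

attribute [local instance 100] LieRing.ofAssociativeRing

variable (k : Type*) [Field k]

def muRels (n : ℕ) : Set (FreeLieAlgebra k (Fin n × Fin n × Fin n)) :=
  {w | ∃ i j l, w = FreeLieAlgebra.of k (i, j, l) + FreeLieAlgebra.of k (j, i, l)} ∪
  {w | ∃ i j l, w = FreeLieAlgebra.of k (i, j, l) + FreeLieAlgebra.of k (i, l, j)} ∪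
  {w | ∃ i j l : Fin n, ¬(i ≠ j ∧ i ≠ l ∧ j ≠ l) ∧ w = FreeLieAlgebra.of k (i, j, l)} ∪
  {w | ∃ j l : Fin n, j ≠ l ∧
    w = ∑ i ∈ Finset.univ.filter (fun i : Fin n => i ≠ j ∧ i ≠ l),
          FreeLieAlgebra.of k (i, j, l)} ∪
  {w | ∃ i j l p q r : Fin n, ({i, j, l} : Finset (Fin n)).card = 3 ∧
    ({p, q, r} : Finset (Fin n)).card = 3 ∧
    Disjoint ({i, j, l} : Finset (Fin n)) ({p, q, r} : Finset (Fin n)) ∧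
    w = ⁅FreeLieAlgebra.of k (i, j, l), FreeLieAlgebra.of k (p, q, r)⁆}

abbrev muLieAlgebra (n : ℕ) :=
  FreeLieAlgebra k (Fin n × Fin n × Fin n) ⧸
    LieSubmodule.lieSpan k (FreeLieAlgebra k (Fin n × Fin n × Fin n)) (muRels k n)

variable {𝔤 : Type*} [LieRing 𝔤] [LieAlgebra k 𝔤]

noncomputable def placed (n : ℕ) (i j l : Fin (n - 1))
    (u v w : UniversalEnvelopingAlgebra k 𝔤) :
    ⨂[k] (_ : Fin (n - 1)), UniversalEnvelopingAlgebra k 𝔤 :=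
  PiTensorProduct.tprod k fun m => if m = i then u else if m = j then v else if m = l then w else 1

open PiTensorProduct TensorProduct

section Placement

variable {R κ A L : Type*} [CommRing R] [DecidableEq κ] [Ring A] [Algebra R A]
  [LieRing L] [LieAlgebra R L] (ρ : L →ₗ⁅R⁆ A)

local notation "ε" => singleAlgHom (R := R) (A := fun _ : κ => A)

theorem commute_singleAlgHom {i j : κ} (h : i ≠ j) (a b : A) : Commute (ε i a) (ε j b) :=
  Commute.tprod (Pi.mulSingle_commute (f := fun _ : κ => A) h a b)

theorem lie_singleAlgHom (i : κ) (a b : A) : ⁅ε i a, ε i b⁆ = ε i ⁅a, b⁆ := by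
  simp only [Ring.lie_def, map_sub, map_mul]

theorem lie_mul_eq_lie_mul_add_mul_lie (a b c : A) : ⁅a, b * c⁆ = ⁅a, b⁆ * c + b * ⁅a, c⁆ := by
  simp only [Ring.lie_def]
  noncomm_ring

noncomputable def slotMap (i : κ) : L →ₗ[R] ⨂[R] (_ : κ), A :=
  (ε i).toLinearMap ∘ₗ (ρ : L →ₗ[R] A)

noncomputable def placeTensor (i j l : κ) : L ⊗[R] (L ⊗[R] L) →ₗ[R] ⨂[R] (_ : κ), A :=
  TensorProduct.lift <| (LinearMap.mul R _).compl₁₂ (slotMap ρ i)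
    (TensorProduct.lift ((LinearMap.mul R _).compl₁₂ (slotMap ρ j) (slotMap ρ l)))

@[simp]
theorem placeTensor_tmul (i j l : κ) (u v w : L) :
    placeTensor ρ i j l (u ⊗ₜ (v ⊗ₜ w)) = ε i (ρ u) * (ε j (ρ v) * ε l (ρ w)) := by
  simp [placeTensor, slotMap]

theorem placeTensor_leftComm {i j : κ} (hij : i ≠ j) (l : κ) (t : L ⊗[R] (L ⊗[R] L)) :
    placeTensor ρ i j l (TensorProduct.leftComm R L L L t) = placeTensor ρ j i l t := by
  change (placeTensor ρ i j l ∘ₗ (TensorProduct.leftComm R L L L).toLinearMap) t = _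
  congr 1
  refine ext_threefold' fun u v w => ?_
  simp only [LinearMap.comp_apply, LinearEquiv.coe_coe, leftComm_tmul, placeTensor_tmul]
  rw [← mul_assoc, ← mul_assoc, (commute_singleAlgHom hij _ _).eq]

theorem placeTensor_lTensor_comm (i : κ) {j l : κ} (hjl : j ≠ l) (t : L ⊗[R] (L ⊗[R] L)) :
    placeTensor ρ i j l (LinearMap.lTensor L (TensorProduct.comm R L L) t) =
      placeTensor ρ i l j t := by
  change (placeTensor ρ i j l ∘ₗ LinearMap.lTensor L (TensorProduct.comm R L L).toLinearMap) t = _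
  congr 1
  refine ext_threefold' fun u v w => ?_
  simp only [LinearMap.comp_apply, LinearMap.lTensor_tmul, LinearEquiv.coe_coe, comm_tmul,
    placeTensor_tmul]
  rw [(commute_singleAlgHom hjl _ _).eq]

theorem commute_placeTensor {i j l : κ} {Y : ⨂[R] (_ : κ), A}
    (hY : ∀ m ∈ ({i, j, l} : Finset κ), ∀ a, Commute (ε m a) Y) (t : L ⊗[R] (L ⊗[R] L)) :
    Commute (placeTensor ρ i j l t) Y := by
  induction t using TensorProduct.induction_on with
  | zero => simp
  | add s t hs ht => simpa using hs.add_left ht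
  | tmul u s =>
    induction s using TensorProduct.induction_on with
    | zero => simp
    | add s s' hs hs' => simpa [tmul_add] using hs.add_left hs'
    | tmul v w =>
      simp only [Finset.mem_insert, Finset.mem_singleton, forall_eq_or_imp, forall_eq] at hY
      exact (hY.1 _).mul_left ((hY.2.1 _).mul_left (hY.2.2 _))

noncomputable def slotSum (T : Finset κ) (g : L) : ⨂[R] (_ : κ), A :=
  ∑ m ∈ T, ε m (ρ g)

theorem lie_slotSum_singleAlgHom {T : Finset κ} {p : κ} (hp : p ∈ T) (g : L) (a : A) :
    ⁅slotSum ρ T g, ε p a⁆ = ε p ⁅ρ g, a⁆ := by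
  rw [slotSum, sum_lie, Finset.sum_eq_single_of_mem p hp fun m _ hmp =>
    commute_iff_lie_eq.mp (commute_singleAlgHom hmp _ _), lie_singleAlgHom]

theorem lie_slotSum_placeTensor {T : Finset κ} {p q r : κ} (hT : {p, q, r} ⊆ T) (g : L)
    (t : L ⊗[R] (L ⊗[R] L)) :
    ⁅slotSum ρ T g, placeTensor ρ p q r t⁆ = placeTensor ρ p q r ⁅g, t⁆ := by
  change (LieAlgebra.ad R _ (slotSum ρ T g) ∘ₗ placeTensor ρ p q r) t =
    (placeTensor ρ p q r ∘ₗ LieModule.toEnd R L _ g) t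
  congr 1
  refine ext_threefold' fun u v w => ?_
  simp only [Finset.insert_subset_iff, Finset.singleton_subset_iff] at hT
  simp only [LinearMap.comp_apply, LieAlgebra.ad_apply, LieModule.toEnd_apply_apply,
    LieModule.lie_tmul_right, tmul_add, map_add, placeTensor_tmul, lie_mul_eq_lie_mul_add_mul_lie,
    lie_slotSum_singleAlgHom ρ hT.1, lie_slotSum_singleAlgHom ρ hT.2.1,
    lie_slotSum_singleAlgHom ρ hT.2.2, LieHom.map_lie, mul_add]

theorem lie_placeTensor_sum_placeTensor {t : L ⊗[R] (L ⊗[R] L)} (ht : ∀ g : L, ⁅g, t⁆ = 0)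
    {T : Finset κ} {p q r a b : κ} (hT : {p, q, r} ⊆ T) (ha : a ∉ ({p, q, r} : Finset κ))
    (hb : b ∉ ({p, q, r} : Finset κ)) (s : L ⊗[R] (L ⊗[R] L)) :
    ⁅placeTensor ρ p q r t, ∑ m ∈ T, placeTensor ρ m a b s⁆ = 0 := by
  suffices h : LieAlgebra.ad R _ (placeTensor ρ p q r t) ∘ₗ ∑ m ∈ T, placeTensor ρ m a b = 0 by
    simpa only [LinearMap.comp_apply, LinearMap.sum_apply, LieAlgebra.ad_apply,
      LinearMap.zero_apply] using LinearMap.congr_fun h s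
  refine ext_threefold' fun u v w => ?_
  have h_slotSum : ⁅placeTensor ρ p q r t, slotSum ρ T u⁆ = 0 := by
    rw [← lie_skew, lie_slotSum_placeTensor ρ hT, ht, map_zero, neg_zero]
  have h_rest : ⁅placeTensor ρ p q r t, ε a (ρ v) * ε b (ρ w)⁆ = 0 :=
    commute_iff_lie_eq.mp <| commute_placeTensor ρ (fun m hm c =>
      (commute_singleAlgHom (ne_of_mem_of_not_mem hm ha) _ _).mul_right
        (commute_singleAlgHom (ne_of_mem_of_not_mem hm hb) _ _)) t
  simp only [LinearMap.comp_apply, LinearMap.sum_apply, placeTensor_tmul, ← Finset.sum_mul,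
    LieAlgebra.ad_apply, LinearMap.zero_apply]
  change ⁅_, slotSum ρ T u * _⁆ = 0
  rw [lie_mul_eq_lie_mul_add_mul_lie, h_slotSum, h_rest, zero_mul, mul_zero, add_zero]

end Placement

theorem sum_sum_eq_zero_of_antisymm {ι M : Type*} [Fintype ι] [AddCommGroup M] {f : ι → ι → M}
    (hf : ∀ i j, f j i = -f i j) (hdiag : ∀ i, f i i = 0) : ∑ i, ∑ j, f i j = 0 := by
  rw [← Fintype.sum_prod_type']
  refine Finset.sum_ninvolution Prod.swap (fun p => ?_) (fun p hp h => hp ?_) (by simp) (by simp)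
  · change f p.1 p.2 + f p.2 p.1 = 0
    rw [hf p.1 p.2, add_neg_cancel]
  · obtain ⟨i, j⟩ := p
    obtain rfl : j = i := congrArg Prod.fst h
    exact hdiag j

section Generators

variable {R κ A L : Type*} [CommRing R] [DecidableEq κ] [Ring A] [Algebra R A]
  [LieRing L] [LieAlgebra R L] (ρ : L →ₗ⁅R⁆ A) (t : L ⊗[R] (L ⊗[R] L))

noncomputable def tensorAt (i j l : κ) : ⨂[R] (_ : κ), A :=
  if i ≠ j ∧ i ≠ l ∧ j ≠ l then placeTensor ρ i j l t else 0

variable {ρ t}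

theorem tensorAt_swap₁₂ (ht : TensorProduct.leftComm R L L L t = -t) (i j l : κ) :
    tensorAt ρ t j i l = -tensorAt ρ t i j l := by
  unfold tensorAt
  by_cases h : i ≠ j ∧ i ≠ l ∧ j ≠ l
  · rw [if_pos ⟨h.1.symm, h.2.2, h.2.1⟩, if_pos h, ← placeTensor_leftComm ρ h.1, ht, map_neg]
  · rw [if_neg (by tauto), if_neg h, neg_zero]

theorem tensorAt_swap₂₃ (ht : LinearMap.lTensor L (TensorProduct.comm R L L) t = -t)
    (i j l : κ) : tensorAt ρ t i l j = -tensorAt ρ t i j l := by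
  unfold tensorAt
  by_cases h : i ≠ j ∧ i ≠ l ∧ j ≠ l
  · rw [if_pos ⟨h.2.1, h.1, h.2.2.symm⟩, if_pos h, ← placeTensor_lTensor_comm ρ i h.2.2, ht,
      map_neg]
  · rw [if_neg (by tauto), if_neg h, neg_zero]

theorem commute_tensorAt_tensorAt {i j l p q r : κ}
    (h : Disjoint ({i, j, l} : Finset κ) {p, q, r}) (s : L ⊗[R] (L ⊗[R] L)) :
    Commute (tensorAt ρ t i j l) (tensorAt ρ s p q r) := by
  unfold tensorAt
  split_ifs
  · refine commute_placeTensor ρ (fun m hm a => ?_) t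
    exact (commute_placeTensor ρ (fun m' hm' b =>
      commute_singleAlgHom (ne_of_mem_of_not_mem hm' (Finset.disjoint_left.mp h hm)) _ _) s).symm
  all_goals simp

theorem lie_tensorAt_sum_tensorAt [Fintype κ] (ht : ∀ g : L, ⁅g, t⁆ = 0) {p q r a b : κ}
    (ha : a ∉ ({p, q, r} : Finset κ)) (hb : b ∉ ({p, q, r} : Finset κ)) :
    ⁅tensorAt ρ t p q r, ∑ m, tensorAt ρ t m a b⁆ = 0 := by
  by_cases hab : a = b
  · simp [tensorAt, hab]
  have h_sum : ∑ m, tensorAt ρ t m a b = ∑ m with m ≠ a ∧ m ≠ b, placeTensor ρ m a b t := by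
    simp [tensorAt, hab, Finset.sum_filter]
  have hT : {p, q, r} ⊆ ({m | m ≠ a ∧ m ≠ b} : Finset κ) := fun m hm => by
    simpa using ⟨ne_of_mem_of_not_mem hm ha, ne_of_mem_of_not_mem hm hb⟩
  rw [h_sum, tensorAt]
  split_ifs
  · exact lie_placeTensor_sum_placeTensor ρ ht hT ha hb t
  · exact zero_lie _

theorem sum_tensorAt_swap₂₃ [Fintype κ]
    (ht : LinearMap.lTensor L (TensorProduct.comm R L L) t = -t) (j l : κ) :
    ∑ i, tensorAt ρ t i l j = -∑ i, tensorAt ρ t i j l := by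
  simp only [tensorAt_swap₂₃ ht _ j l, Finset.sum_neg_distrib]

theorem sum_sum_tensorAt [Fintype κ] (ht : TensorProduct.leftComm R L L L t = -t) (l : κ) :
    ∑ i, ∑ j, tensorAt ρ t j i l = 0 :=
  sum_sum_eq_zero_of_antisymm (fun i j => tensorAt_swap₁₂ ht j i l) (fun i => by simp [tensorAt])

end Generators

section Presentation

variable {R A L : Type*} [CommRing R] [Ring A] [Algebra R A] [LieRing L] [LieAlgebra R L]
  (ρ : L →ₗ⁅R⁆ A) (t : L ⊗[R] (L ⊗[R] L)) {m : ℕ}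

noncomputable def muGen (i j l : Fin (m + 1)) : ⨂[R] (_ : Fin m), A :=
  Fin.lastCases
    (Fin.lastCases 0 (fun j => Fin.lastCases 0 (fun l => -∑ i, tensorAt ρ t i j l) l) j)
    (fun i => Fin.lastCases (Fin.lastCases 0 (fun l => ∑ j, tensorAt ρ t j i l) l)
      (fun j => Fin.lastCases (-∑ l, tensorAt ρ t l i j) (fun l => tensorAt ρ t i j l) l) j) i

variable {ρ t}

@[simp]
theorem muGen_castSucc (i j l : Fin m) :
    muGen ρ t i.castSucc j.castSucc l.castSucc = tensorAt ρ t i j l := by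
  simp [muGen]

theorem muGen_swap₁₂ (h₁₂ : TensorProduct.leftComm R L L L t = -t)
    (h₂₃ : LinearMap.lTensor L (TensorProduct.comm R L L) t = -t) (i j l : Fin (m + 1)) :
    muGen ρ t j i l = -muGen ρ t i j l := by
  induction i using Fin.lastCases <;> induction j using Fin.lastCases <;>
    induction l using Fin.lastCases <;>
    simp only [muGen, Fin.lastCases_last, Fin.lastCases_castSucc, neg_zero, neg_neg]
  · rw [sum_tensorAt_swap₂₃ h₂₃, neg_neg]
  · exact tensorAt_swap₁₂ h₁₂ _ _ _

theorem muGen_swap₂₃ (h₂₃ : LinearMap.lTensor L (TensorProduct.comm R L L) t = -t)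
    (i j l : Fin (m + 1)) : muGen ρ t i l j = -muGen ρ t i j l := by
  induction i using Fin.lastCases <;> induction j using Fin.lastCases <;>
    induction l using Fin.lastCases <;>
    simp only [muGen, Fin.lastCases_last, Fin.lastCases_castSucc, neg_zero, neg_neg]
  · rw [sum_tensorAt_swap₂₃ h₂₃, neg_neg]
  · exact tensorAt_swap₂₃ h₂₃ _ _ _

theorem muGen_eq_zero_of_not_distinct {i j l : Fin (m + 1)} (h : ¬(i ≠ j ∧ i ≠ l ∧ j ≠ l)) :
    muGen ρ t i j l = 0 := by
  induction i using Fin.lastCases <;> induction j using Fin.lastCases <;>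
    induction l using Fin.lastCases <;> simp_all [muGen, tensorAt, eq_comm (a := Fin.last m)]

theorem sum_muGen (h₁₂ : TensorProduct.leftComm R L L L t = -t) (j l : Fin (m + 1)) :
    ∑ i, muGen ρ t i j l = 0 := by
  induction j using Fin.lastCases <;> induction l using Fin.lastCases <;>
    simp [muGen, Fin.sum_univ_castSucc, sum_sum_tensorAt h₁₂]

end Presentation

section Commutation

variable {R A L : Type*} [CommRing R] [Ring A] [Algebra R A] [LieRing L] [LieAlgebra R L]
  {ρ : L →ₗ⁅R⁆ A} {t : L ⊗[R] (L ⊗[R] L)} {m : ℕ}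

theorem notMem_of_disjoint_castSucc {i j l a : Fin m} {S : Finset (Fin (m + 1))}
    (h : Disjoint ({i.castSucc, j.castSucc, l.castSucc} : Finset (Fin (m + 1))) S)
    (ha : a.castSucc ∈ S) : a ∉ ({i, j, l} : Finset (Fin m)) := by
  simpa using Finset.disjoint_right.mp h ha

theorem lie_tensorAt_muGen (ht : ∀ g : L, ⁅g, t⁆ = 0) {i j l : Fin m} {p q r : Fin (m + 1)}
    (h : Disjoint ({i.castSucc, j.castSucc, l.castSucc} : Finset (Fin (m + 1))) {p, q, r}) :
    ⁅tensorAt ρ t i j l, muGen ρ t p q r⁆ = 0 := by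
  induction p using Fin.lastCases <;> induction q using Fin.lastCases <;>
    induction r using Fin.lastCases <;>
    simp only [muGen, Fin.lastCases_last, Fin.lastCases_castSucc, lie_zero, lie_neg, neg_eq_zero]
  case last.cast.cast q r | cast.last.cast q r | cast.cast.last q r =>
    exact lie_tensorAt_sum_tensorAt ht (notMem_of_disjoint_castSucc h (by simp))
      (notMem_of_disjoint_castSucc h (by simp))
  case cast.cast.cast p q r =>
    refine commute_iff_lie_eq.mp (commute_tensorAt_tensorAt ?_ t)
    refine Finset.disjoint_right.mpr fun a ha => notMem_of_disjoint_castSucc h ?_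
    simp only [Finset.mem_insert, Finset.mem_singleton] at ha ⊢
    rcases ha with rfl | rfl | rfl <;> simp

theorem exists_castSucc_of_last_notMem {i j l : Fin (m + 1)}
    (h : Fin.last m ∉ ({i, j, l} : Finset (Fin (m + 1)))) :
    ∃ i' j' l' : Fin m, i = i'.castSucc ∧ j = j'.castSucc ∧ l = l'.castSucc := by
  simp only [Finset.mem_insert, Finset.mem_singleton, not_or] at h
  obtain ⟨i', rfl⟩ := Fin.exists_castSucc_eq.mpr (Ne.symm h.1)
  obtain ⟨j', rfl⟩ := Fin.exists_castSucc_eq.mpr (Ne.symm h.2.1)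
  obtain ⟨l', rfl⟩ := Fin.exists_castSucc_eq.mpr (Ne.symm h.2.2)
  exact ⟨i', j', l', rfl, rfl, rfl⟩

theorem lie_muGen_muGen (ht : ∀ g : L, ⁅g, t⁆ = 0) {i j l p q r : Fin (m + 1)}
    (h : Disjoint ({i, j, l} : Finset (Fin (m + 1))) {p, q, r}) :
    ⁅muGen ρ t i j l, muGen ρ t p q r⁆ = 0 := by
  by_cases hlast : Fin.last m ∈ ({i, j, l} : Finset (Fin (m + 1)))
  · obtain ⟨p, q, r, rfl, rfl, rfl⟩ :=
      exists_castSucc_of_last_notMem (Finset.disjoint_left.mp h hlast)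
    rw [← lie_skew, muGen_castSucc, lie_tensorAt_muGen ht h.symm, neg_zero]
  · obtain ⟨i, j, l, rfl, rfl, rfl⟩ := exists_castSucc_of_last_notMem hlast
    rw [muGen_castSucc, lie_tensorAt_muGen ht h]

end Commutation

theorem exists_lieHom_quotient_of_le_ker {R M L : Type*} [CommRing R] [LieRing M]
    [LieAlgebra R M] [LieRing L] [LieAlgebra R L] (I : LieIdeal R M) (G : M →ₗ⁅R⁆ L)
    (h : I ≤ G.ker) : ∃ F : M ⧸ I →ₗ⁅R⁆ L, ∀ x, F (LieSubmodule.Quotient.mk' I x) = G x := by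
  have h' : I.toSubmodule ≤ LinearMap.ker (G : M →ₗ[R] L) := by
    rw [← LieHom.ker_toSubmodule]
    exact (LieSubmodule.toSubmodule_le_toSubmodule _ _).mpr h
  let F₀ : M ⧸ I →ₗ[R] L := I.toSubmodule.liftQ G h'
  refine ⟨{ F₀ with map_lie' := fun {u v} => ?_ }, fun x => rfl⟩
  obtain ⟨a, rfl⟩ := LieSubmodule.Quotient.surjective_mk' I u
  obtain ⟨b, rfl⟩ := LieSubmodule.Quotient.surjective_mk' I v
  exact G.map_lie a b

section Relations

variable {k} {A L : Type*} [Ring A] [Algebra k A] [LieRing L] [LieAlgebra k L]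
  {ρ : L →ₗ⁅k⁆ A} {t : L ⊗[k] (L ⊗[k] L)} {m : ℕ}

theorem muRels_subset_ker_lift_muGen (h₁₂ : TensorProduct.leftComm k L L L t = -t)
    (h₂₃ : LinearMap.lTensor L (TensorProduct.comm k L L) t = -t) (ht : ∀ g : L, ⁅g, t⁆ = 0) :
    muRels k (m + 1) ⊆
      ((FreeLieAlgebra.lift k fun x : Fin (m + 1) × Fin (m + 1) × Fin (m + 1) =>
        muGen ρ t x.1 x.2.1 x.2.2).ker : Set _) := by
  intro w hw
  rw [SetLike.mem_coe, LieHom.mem_ker]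
  simp only [muRels, Set.mem_union, Set.mem_ofPred_eq] at hw
  rcases hw with ((((⟨i, j, l, rfl⟩ | ⟨i, j, l, rfl⟩) | ⟨i, j, l, hijl, rfl⟩) | ⟨j, l, -, rfl⟩) |
    ⟨i, j, l, p, q, r, -, -, hdisj, rfl⟩)
  · simp [muGen_swap₁₂ h₁₂ h₂₃ i j l]
  · simp [muGen_swap₂₃ h₂₃ i j l]
  · simp [muGen_eq_zero_of_not_distinct hijl]
  · rw [map_sum]
    simp only [FreeLieAlgebra.lift_of_apply]
    rw [Finset.sum_filter_of_ne fun i _ hi => ?_, sum_muGen h₁₂]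
    by_contra hij
    exact hi (muGen_eq_zero_of_not_distinct (by tauto))
  · rw [LieHom.map_lie, FreeLieAlgebra.lift_of_apply, FreeLieAlgebra.lift_of_apply]
    exact lie_muGen_muGen ht hdisj

end Relations

section Placed

variable {k}

theorem placed_eq_mul {n : ℕ} {i j l : Fin (n - 1)} (hij : i ≠ j) (hil : i ≠ l) (hjl : j ≠ l)
    (u v w : UniversalEnvelopingAlgebra k 𝔤) :
    placed k n i j l u v w = singleAlgHom i u * (singleAlgHom j v * singleAlgHom l w) := by
  simp only [placed, singleAlgHom_apply, tprod_mul_tprod]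
  congr 1
  funext a
  simp only [MonoidHom.mulSingle_apply, Pi.mul_apply, Pi.mulSingle_apply]
  split_ifs <;> simp_all

end Placed

/-- Given a Lie algebra `𝔤` and an invariant element `φ = Σ_s x_s⊗y_s⊗z_s ∈ (∧³𝔤)^𝔤`,
the assignment `μ_{ijl} ↦ φ_{ijl}` defines a Lie algebra homomorphism
`L → U(𝔤)^{⊗(n-1)}` (with the commutator Lie bracket on the target). -/
theorem mu_to_phi_lieHom (n : ℕ) (ι : Type*) [Fintype ι] (x y z : ι → 𝔤)
    (halt₁ : ∑ s, x s ⊗ₜ[k] (y s ⊗ₜ[k] z s) = -∑ s, y s ⊗ₜ[k] (x s ⊗ₜ[k] z s))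
    (halt₂ : ∑ s, x s ⊗ₜ[k] (y s ⊗ₜ[k] z s) = -∑ s, x s ⊗ₜ[k] (z s ⊗ₜ[k] y s))
    (hinv : ∀ g : 𝔤,
      ∑ s, (⁅g, x s⁆ ⊗ₜ[k] (y s ⊗ₜ[k] z s) + x s ⊗ₜ[k] (⁅g, y s⁆ ⊗ₜ[k] z s)
            + x s ⊗ₜ[k] (y s ⊗ₜ[k] ⁅g, z s⁆)) = (0 : 𝔤 ⊗[k] (𝔤 ⊗[k] 𝔤))) :
    ∃ F : muLieAlgebra k n →ₗ⁅k⁆ (⨂[k] (_ : Fin (n - 1)), UniversalEnvelopingAlgebra k 𝔤),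
      ∀ (i j l : Fin n) (hi : (i : ℕ) < n - 1) (hj : (j : ℕ) < n - 1) (hl : (l : ℕ) < n - 1),
        i ≠ j → i ≠ l → j ≠ l →
        F (LieSubmodule.Quotient.mk' _ (FreeLieAlgebra.of k (i, j, l))) =
          ∑ s, placed k n ⟨i, hi⟩ ⟨j, hj⟩ ⟨l, hl⟩
            (UniversalEnvelopingAlgebra.ι k (x s)) (UniversalEnvelopingAlgebra.ι k (y s))
            (UniversalEnvelopingAlgebra.ι k (z s)) := by
  set t := ∑ s, x s ⊗ₜ[k] (y s ⊗ₜ[k] z s) with ht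
  have h₁₂ : TensorProduct.leftComm k 𝔤 𝔤 𝔤 t = -t := by
    simp only [t, map_sum, leftComm_tmul]
    rw [← ht, halt₁, neg_neg]
  have h₂₃ : LinearMap.lTensor 𝔤 (TensorProduct.comm k 𝔤 𝔤) t = -t := by
    simp only [t, map_sum, LinearMap.lTensor_tmul, LinearEquiv.coe_coe, comm_tmul]
    rw [← ht, halt₂, neg_neg]
  have hinv' : ∀ g : 𝔤, ⁅g, t⁆ = 0 := fun g => by
    simpa only [t, lie_sum, LieModule.lie_tmul_right, tmul_add, add_assoc] using hinv g
  cases n with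
  | zero => exact ⟨0, fun i => i.elim0⟩
  | succ m =>
    obtain ⟨F, hF⟩ := exists_lieHom_quotient_of_le_ker _ _ <| LieSubmodule.lieSpan_le.mpr <|
      muRels_subset_ker_lift_muGen (ρ := UniversalEnvelopingAlgebra.ι k) h₁₂ h₂₃ hinv'
    refine ⟨F, fun i j l hi hj hl hij hil hjl => ?_⟩
    rw [hF, FreeLieAlgebra.lift_of_apply]
    change muGen _ t (Fin.castSucc ⟨i, hi⟩) (Fin.castSucc ⟨j, hj⟩) (Fin.castSucc ⟨l, hl⟩) = _
    have hij' : (⟨i, hi⟩ : Fin m) ≠ ⟨j, hj⟩ := Fin.ne_of_val_ne (Fin.val_ne_of_ne hij :)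
    have hil' : (⟨i, hi⟩ : Fin m) ≠ ⟨l, hl⟩ := Fin.ne_of_val_ne (Fin.val_ne_of_ne hil :)
    have hjl' : (⟨j, hj⟩ : Fin m) ≠ ⟨l, hl⟩ := Fin.ne_of_val_ne (Fin.val_ne_of_ne hjl :)
    rw [muGen_castSucc, tensorAt, if_pos ⟨hij', hil', hjl'⟩, map_sum]
    refine Finset.sum_congr rfl fun s _ => ?_
    rw [placeTensor_tmul, placed_eq_mul hij' hil' hjl']
end
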